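/- arXiv:2603.16465 — 5 statements merged into one kernel-verified Lean document; each statement's English description precedes it below -/
import Mathlib

section
/- Let a, c, p ∈ ℂ with −c ∉ ℕ ∪ {0}. Define the sequence (u_n) of Maclaurin coefficients of e^{pz} M(a,c;z), i.e. u_n = ∑_{k=0}^{n} (p^k / k!) · (a)_{n−k} / ((c)_{n−k} (n−k)!), so that e^{pz} M(a,c;z) = ∑_{n=0}^∞ u_n z^n for all z ∈ ℂ. Then u_0 = 1, u_1 = a/c + p, and for all n ≥ 1, u_{n+1} = ((a + c p + 2 n p + n) / ((n+1)(c+n))) u_n − ((p(p+1)) / ((n+1)(c+n))) u_{n−1}. -/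
open Complex Finset Polynomial

noncomputable def M (a c z : ℂ) : ℂ :=
  ∑' n : ℕ, (ascPochhammer ℂ n).eval a / ((ascPochhammer ℂ n).eval c * (Nat.factorial n : ℂ)) * z ^ n

noncomputable def cE (p : ℂ) (k : ℕ) : ℂ := p ^ k / (Nat.factorial k : ℂ)
noncomputable def cB (a c : ℂ) (m : ℕ) : ℂ :=
  (ascPochhammer ℂ m).eval a / ((ascPochhammer ℂ m).eval c * (Nat.factorial m : ℂ))

lemma asc_succ (x : ℂ) (m : ℕ) :
    (ascPochhammer ℂ (m+1)).eval x = (ascPochhammer ℂ m).eval x * (x + m) := by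
  rw [ascPochhammer_succ_right]
  simp [mul_comm]

lemma asc_c_ne (c : ℂ) (hc : ∀ n : ℕ, -c ≠ (n : ℂ)) (m : ℕ) :
    (ascPochhammer ℂ m).eval c ≠ 0 := by
  induction m with
  | zero => simp
  | succ m ih =>
    rw [asc_succ]
    refine mul_ne_zero ih fun h => hc m ?_
    linear_combination -h

lemma recE (p : ℂ) (k : ℕ) : ((k:ℂ)+1) * cE p (k+1) = p * cE p k := by
  have : ((Nat.factorial k : ℕ) : ℂ) ≠ 0 := Nat.cast_ne_zero.2 (Nat.factorial_ne_zero k)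
  have h2 : ((Nat.factorial (k+1) : ℕ) : ℂ) = ((k:ℂ)+1) * (Nat.factorial k : ℂ) := by
    push_cast [Nat.factorial_succ]; ring
  have hk1 : ((k:ℂ)+1) ≠ 0 := by exact_mod_cast Nat.succ_ne_zero k
  have h3 : (((k:ℂ)+1) * (Nat.factorial k : ℂ)) ≠ 0 := mul_ne_zero hk1 this
  simp only [cE, h2, pow_succ]
  rw [← mul_div_assoc, ← mul_div_assoc, div_eq_div_iff h3 this]
  ring

lemma recB (a c : ℂ) (hc : ∀ n : ℕ, -c ≠ (n : ℂ)) (m : ℕ) :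
    ((m:ℂ)+1) * (c + m) * cB a c (m+1) = (a + m) * cB a c m := by
  have h1 : ((Nat.factorial m : ℕ) : ℂ) ≠ 0 := Nat.cast_ne_zero.2 (Nat.factorial_ne_zero m)
  have h2 : (ascPochhammer ℂ m).eval c ≠ 0 := asc_c_ne c hc m
  have h3 : c + (m:ℂ) ≠ 0 := fun h => hc m (by linear_combination -h)
  have h4 : ((m:ℂ)+1) ≠ 0 := by exact_mod_cast Nat.succ_ne_zero m
  simp only [cB, asc_succ, Nat.factorial_succ, Nat.cast_mul, Nat.cast_add, Nat.cast_one]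
  field_simp

noncomputable def cU (a c p : ℂ) (n : ℕ) : ℂ :=
  ∑ k ∈ Finset.range (n+1), cE p k * cB a c (n-k)

lemma sumA (a c p : ℂ) (n : ℕ) :
    ∑ k ∈ Finset.range (n+2), (k:ℂ) * (cE p k * cB a c (n+1-k)) = p * cU a c p n := by
  rw [Finset.sum_range_succ']
  simp only [Nat.cast_zero, zero_mul, add_zero]
  rw [cU, Finset.mul_sum]
  refine Finset.sum_congr rfl fun j hj => ?_
  have h : n + 1 - (j+1) = n - j := by omega
  rw [h]
  have h2 : ((j+1:ℕ):ℂ) = (j:ℂ)+1 := by push_cast; ring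
  rw [h2, ← mul_assoc, recE, mul_assoc]

lemma sumW (a c p : ℂ) (n : ℕ) :
    ∑ j ∈ Finset.range (n+2), ((n+1-j : ℕ):ℂ) * (cE p j * cB a c (n+1-j))
      = ((n:ℂ)+1) * cU a c p (n+1) - p * cU a c p n := by
  rw [← sumA a c p n]
  rw [show cU a c p (n+1) = ∑ k ∈ Finset.range (n+2), cE p k * cB a c (n+1-k) from rfl]
  rw [Finset.mul_sum, ← Finset.sum_sub_distrib]
  refine Finset.sum_congr rfl fun j hj => ?_
  have hj' : j ≤ n+1 := by have := Finset.mem_range.mp hj; omega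
  rw [Nat.cast_sub hj']
  push_cast
  ring

lemma keyrec (a c p : ℂ) (hc : ∀ n : ℕ, -c ≠ (n : ℂ)) (m : ℕ) :
    ((m:ℂ)+2) * (c+(m:ℂ)+1) * cU a c p (m+2)
      = (a + c*p + 2*((m:ℂ)+1)*p + ((m:ℂ)+1)) * cU a c p (m+1) - p*(p+1) * cU a c p m := by
  have e1 : ((m:ℂ)+2) * (c+(m:ℂ)+1) * cU a c p (m+2)
      = ∑ k ∈ Finset.range (m+3),
          ((k:ℂ) * (c+(m:ℂ)+1) * (cE p k * cB a c (m+2-k))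
          + ((m+2-k:ℕ):ℂ) * (c + ((m+1-k:ℕ):ℂ)) * (cE p k * cB a c (m+2-k))
          + ((m+2-k:ℕ):ℂ) * (k:ℂ) * (cE p k * cB a c (m+2-k))) := by
    rw [show cU a c p (m+2) = ∑ k ∈ Finset.range (m+3), cE p k * cB a c (m+2-k) from rfl,
      Finset.mul_sum]
    refine Finset.sum_congr rfl fun k hk => ?_
    have hk' : k ≤ m+2 := by have := Finset.mem_range.mp hk; omega
    rcases Nat.lt_or_ge k (m+2) with h | h
    · have h1 : k ≤ m+1 := by omega
      rw [Nat.cast_sub (by omega : k ≤ m+2), Nat.cast_sub h1]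
      push_cast
      ring
    · have hk2 : k = m+2 := by omega
      subst hk2
      simp only [Nat.sub_self, Nat.cast_zero]
      have h0 : m+1-(m+2) = 0 := by omega
      rw [h0]
      push_cast
      ring
  have hS1 : ∑ k ∈ Finset.range (m+3), (k:ℂ) * (c+(m:ℂ)+1) * (cE p k * cB a c (m+2-k))
      = (c+(m:ℂ)+1) * (p * cU a c p (m+1)) := by
    rw [← sumA a c p (m+1), Finset.mul_sum]
    exact Finset.sum_congr rfl fun k _ => by ring
  have hS3 : ∑ k ∈ Finset.range (m+3), ((m+2-k:ℕ):ℂ) * (k:ℂ) * (cE p k * cB a c (m+2-k))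
      = p * ∑ j ∈ Finset.range (m+2), ((m+1-j:ℕ):ℂ) * (cE p j * cB a c (m+1-j)) := by
    rw [Finset.sum_range_succ']
    simp only [Nat.cast_zero, mul_zero, zero_mul, add_zero]
    rw [Finset.mul_sum]
    refine Finset.sum_congr rfl fun j hj => ?_
    have h1 : m+2-(j+1) = m+1-j := by omega
    have h2 : ((j+1:ℕ):ℂ) = (j:ℂ)+1 := by push_cast; ring
    rw [h1, h2]
    have := recE p j
    linear_combination ((m+1-j:ℕ):ℂ) * cB a c (m+1-j) * this
  have hS2 : ∑ k ∈ Finset.range (m+3),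
        ((m+2-k:ℕ):ℂ) * (c + ((m+1-k:ℕ):ℂ)) * (cE p k * cB a c (m+2-k))
      = a * cU a c p (m+1)
        + ∑ j ∈ Finset.range (m+2), ((m+1-j:ℕ):ℂ) * (cE p j * cB a c (m+1-j)) := by
    rw [Finset.sum_range_succ]
    have hz : ((m+2-(m+2):ℕ):ℂ) = 0 := by norm_num
    rw [hz]
    simp only [zero_mul, mul_zero, add_zero]
    have hterm : ∀ k ∈ Finset.range (m+2),
        ((m+2-k:ℕ):ℂ) * (c + ((m+1-k:ℕ):ℂ)) * (cE p k * cB a c (m+2-k))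
          = a * (cE p k * cB a c (m+1-k)) + ((m+1-k:ℕ):ℂ) * (cE p k * cB a c (m+1-k)) := by
      intro k hk
      have hk' : k ≤ m+1 := by have := Finset.mem_range.mp hk; omega
      have h1 : m+2-k = (m+1-k)+1 := by omega
      rw [h1]
      push_cast
      have := recB a c hc (m+1-k)
      linear_combination (cE p k) * this
    rw [Finset.sum_congr rfl hterm, Finset.sum_add_distrib,
      show cU a c p (m+1) = ∑ k ∈ Finset.range (m+2), cE p k * cB a c (m+1-k) from rfl,
      Finset.mul_sum]
  rw [e1, Finset.sum_add_distrib, Finset.sum_add_distrib, hS1, hS2, hS3, sumW a c p m]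
  ring

lemma sumE (p z : ℂ) : Summable (fun n => ‖cE p n * z^n‖) := by
  refine (Real.summable_pow_div_factorial ‖p*z‖).congr fun n => ?_
  simp only [cE, norm_mul, norm_div, norm_pow, Complex.norm_natCast, mul_pow]
  ring

lemma expz (p z : ℂ) : Complex.exp (p*z) = ∑' n, cE p n * z^n := by
  rw [Complex.exp_eq_exp_ℂ, NormedSpace.exp_eq_tsum_div]
  exact tsum_congr fun n => by rw [cE, mul_pow]; ring

lemma sumB (a c : ℂ) (hc : ∀ n : ℕ, -c ≠ (n : ℂ)) (z : ℂ) :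
    Summable (fun n => ‖cB a c n * z^n‖) := by
  obtain ⟨N, hN⟩ := exists_nat_ge (2*‖c‖ + ‖a‖ + 8*‖z‖ + 2)
  refine summable_of_ratio_norm_eventually_le (r := 1/2) (by norm_num) ?_
  filter_upwards [Filter.eventually_ge_atTop N] with m hm
  simp only [norm_norm]
  have hmR : 2*‖c‖ + ‖a‖ + 8*‖z‖ + 2 ≤ (m:ℝ) := le_trans hN (Nat.cast_le.2 hm)
  have h3 : c + (m:ℂ) ≠ 0 := fun h => hc m (by linear_combination -h)
  have h4 : ((m:ℂ)+1) ≠ 0 := by exact_mod_cast Nat.succ_ne_zero m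
  have hD : (((m:ℂ)+1) * (c+(m:ℂ))) ≠ 0 := mul_ne_zero h4 h3
  have key : cB a c (m+1) * z^(m+1)
      = ((a+(m:ℂ))*z / (((m:ℂ)+1)*(c+(m:ℂ)))) * (cB a c m * z^m) := by
    rw [div_mul_eq_mul_div, eq_div_iff hD]
    linear_combination z^(m+1) * recB a c hc m
  rw [key, norm_mul]
  have hbd : ‖(a+(m:ℂ))*z / (((m:ℂ)+1)*(c+(m:ℂ)))‖ ≤ 1/2 := by
    rw [norm_div, norm_mul, norm_mul]
    have hca : ‖a+(m:ℂ)‖ ≤ ‖a‖ + (m:ℝ) := by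
      simpa [Complex.norm_natCast] using norm_add_le a (m:ℂ)
    have hcm : (m:ℝ) - ‖c‖ ≤ ‖c+(m:ℂ)‖ := by
      have h := norm_add_le (c+(m:ℂ)) (-c)
      rw [show c+(m:ℂ)+ -c = ((m:ℕ):ℂ) by ring, Complex.norm_natCast, norm_neg] at h
      linarith
    have hm1 : ‖((m:ℂ)+1)‖ = (m:ℝ)+1 := by
      rw [show ((m:ℂ)+1) = ((m+1:ℕ):ℂ) by push_cast; ring, Complex.norm_natCast]
      push_cast; ring
    have hz0 : (0:ℝ) ≤ ‖z‖ := norm_nonneg z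
    have hc0 : (0:ℝ) ≤ ‖c‖ := norm_nonneg c
    have ha0 : (0:ℝ) ≤ ‖a‖ := norm_nonneg a
    have hpos : 0 < ‖((m:ℂ)+1)‖ * ‖c+(m:ℂ)‖ := by
      rw [hm1]
      have : (0:ℝ) < (m:ℝ) - ‖c‖ := by linarith
      nlinarith [Nat.cast_nonneg (α := ℝ) m]
    rw [div_le_iff₀ hpos, hm1]
    nlinarith [mul_le_mul hca (le_refl ‖z‖) hz0 (by linarith : (0:ℝ) ≤ ‖a‖+(m:ℝ)),
      mul_le_mul_of_nonneg_left hcm (by linarith : (0:ℝ) ≤ (m:ℝ)+1),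
      norm_nonneg (a+(m:ℂ)), Nat.cast_nonneg (α := ℝ) m]
  calc ‖(a+(m:ℂ))*z / (((m:ℂ)+1)*(c+(m:ℂ)))‖ * ‖cB a c m * z^m‖
      ≤ 1/2 * ‖cB a c m * z^m‖ :=
        mul_le_mul_of_nonneg_right hbd (norm_nonneg _)

theorem stmt0 (a c p : ℂ) (hc : ∀ n : ℕ, -c ≠ (n : ℂ))
    (u : ℕ → ℂ)
    (hu : ∀ n : ℕ, u n = ∑ k ∈ Finset.range (n + 1),
      p ^ k / (Nat.factorial k : ℂ) *
        ((ascPochhammer ℂ (n - k)).eval a /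
          ((ascPochhammer ℂ (n - k)).eval c * (Nat.factorial (n - k) : ℂ)))) :
    (∀ z : ℂ, Complex.exp (p * z) * M a c z = ∑' n : ℕ, u n * z ^ n) ∧
    u 0 = 1 ∧ u 1 = a / c + p ∧
    ∀ n : ℕ, 1 ≤ n →
      u (n + 1) = (a + c * p + 2 * (n : ℂ) * p + (n : ℂ)) / (((n : ℂ) + 1) * (c + (n : ℂ))) * u n
        - p * (p + 1) / (((n : ℂ) + 1) * (c + (n : ℂ))) * u (n - 1) := by
  have hucU : ∀ n, u n = cU a c p n := fun n => by
    rw [hu n]; exact Finset.sum_congr rfl fun k _ => rfl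
  refine ⟨?_, ?_, ?_, ?_⟩
  · intro z
    rw [expz p z, show M a c z = ∑' n, cB a c n * z^n from rfl,
      tsum_mul_tsum_eq_tsum_sum_range_of_summable_norm (sumE p z) (sumB a c hc z)]
    refine tsum_congr fun n => ?_
    rw [hucU n, cU, Finset.sum_mul]
    refine Finset.sum_congr rfl fun k hk => ?_
    have hzz : z^k * z^(n-k) = z^n := by
      rw [← pow_add]
      congr 1
      have := Finset.mem_range.mp hk; omega
    calc cE p k * z^k * (cB a c (n-k) * z^(n-k))
        = cE p k * cB a c (n-k) * (z^k * z^(n-k)) := by ring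
      _ = _ := by rw [hzz]
  · rw [hu 0]; simp
  · rw [hu 1, Finset.sum_range_succ, Finset.sum_range_one]
    simp [ascPochhammer_one]
  · intro n hn
    obtain ⟨m, rfl⟩ : ∃ m, n = m+1 := ⟨n-1, by omega⟩
    have h3 : c + ((m:ℂ)+1) ≠ 0 := fun h => hc (m+1) (by push_cast; linear_combination -h)
    have h4 : ((m:ℂ)+1+1) ≠ 0 := by
      have : ((m+2:ℕ):ℂ) ≠ 0 := Nat.cast_ne_zero.2 (by omega)
      push_cast at this
      intro h; exact this (by linear_combination h)
    have hk := keyrec a c p hc m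
    rw [show m+1+1 = m+2 from rfl, show m+1-1 = m from rfl, hucU, hucU, hucU]
    push_cast
    field_simp
    linear_combination hk
end

section
/- Let a, c, p ∈ ℂ with −c ∉ ℕ ∪ {0}. Define sequences (u_n) and (v_n) by u_0 = 1, u_1 = a/c + p, v_0 = 1, v_1 = a/c − p, and for n ≥ 1: u_{n+1} = ((a + p(c + 2n) + n)/((n+1)(c+n))) u_n − (p(p+1)/((n+1)(c+n))) u_{n−1}, and v_{n+1} = ((a − p(c + 2n) + n)/((n+1)(c+n))) v_n − ((p−1)p/((n+1)(c+n))) v_{n−1}. Then sinh(pz) M(a,c;z) = ∑_{n=0}^∞ ((u_n − v_n)/2) z^n for all z ∈ ℂ. -/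
open Complex Finset Polynomial

namespace HypAux

noncomputable def A (a c : ℂ) (k : ℕ) : ℂ :=
  (ascPochhammer ℂ k).eval a / ((ascPochhammer ℂ k).eval c * (Nat.factorial k : ℂ))

noncomputable def B (p : ℂ) (i : ℕ) : ℂ := p ^ i / (Nat.factorial i : ℂ)

noncomputable def W (a c p : ℂ) (n : ℕ) : ℂ :=
  ∑ ij ∈ Finset.HasAntidiagonal.antidiagonal n, B p ij.1 * A a c ij.2

lemma cadd_ne (c : ℂ) (hc : ∀ n : ℕ, -c ≠ (n : ℂ)) (k : ℕ) : c + (k : ℂ) ≠ 0 := by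
  intro h
  exact hc k (by linear_combination -h)

lemma poch_ne (c : ℂ) (hc : ∀ n : ℕ, -c ≠ (n : ℂ)) (k : ℕ) :
    (ascPochhammer ℂ k).eval c ≠ 0 := by
  induction k with
  | zero => simp
  | succ k ih =>
    rw [ascPochhammer_succ_eval]
    exact mul_ne_zero ih (cadd_ne c hc k)

lemma A_rec (a c : ℂ) (hc : ∀ n : ℕ, -c ≠ (n : ℂ)) (k : ℕ) :
    ((k : ℂ) + 1) * (c + (k : ℂ)) * A a c (k + 1) = (a + (k : ℂ)) * A a c k := by
  have h1 := poch_ne c hc k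
  have h2 := cadd_ne c hc k
  have h3 : ((Nat.factorial k : ℕ) : ℂ) ≠ 0 := Nat.cast_ne_zero.2 (Nat.factorial_ne_zero k)
  have h4 : ((k : ℂ) + 1) ≠ 0 := by
    have : ((k + 1 : ℕ) : ℂ) ≠ 0 := Nat.cast_ne_zero.2 (Nat.succ_ne_zero k)
    push_cast at this; exact this
  simp only [A, ascPochhammer_succ_eval, Nat.factorial_succ, Nat.cast_mul, Nat.cast_add,
    Nat.cast_one]
  field_simp

lemma B_rec (p : ℂ) (i : ℕ) :
    ((i : ℂ) + 1) * B p (i + 1) = p * B p i := by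
  have h3 : ((Nat.factorial i : ℕ) : ℂ) ≠ 0 := Nat.cast_ne_zero.2 (Nat.factorial_ne_zero i)
  have h4 : ((i : ℂ) + 1) ≠ 0 := by
    have : ((i + 1 : ℕ) : ℂ) ≠ 0 := Nat.cast_ne_zero.2 (Nat.succ_ne_zero i)
    push_cast at this; exact this
  simp only [B, Nat.factorial_succ, Nat.cast_mul, Nat.cast_add, Nat.cast_one, pow_succ]
  field_simp

lemma sum_i (a c p : ℂ) (n : ℕ) :
    ∑ ij ∈ Finset.HasAntidiagonal.antidiagonal (n + 1), (ij.1 : ℂ) * (B p ij.1 * A a c ij.2)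
      = p * ∑ ij ∈ Finset.HasAntidiagonal.antidiagonal n, B p ij.1 * A a c ij.2 := by
  rw [Finset.Nat.sum_antidiagonal_succ]
  simp only [Nat.cast_zero, zero_mul, zero_add]
  rw [Finset.mul_sum]
  refine Finset.sum_congr rfl fun ij _ => ?_
  have hB := B_rec p ij.1
  push_cast
  linear_combination A a c ij.2 * hB

lemma W_rec (a c p : ℂ) (hc : ∀ n : ℕ, -c ≠ (n : ℂ)) (m : ℕ) :
    ((m : ℂ) + 2) * (c + (m : ℂ) + 1) * W a c p (m + 2)
      = (a + p * (c + 2 * ((m : ℂ) + 1)) + ((m : ℂ) + 1)) * W a c p (m + 1)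
        - p * (p + 1) * W a c p m := by
  simp only [W]
  have key1 := sum_i a c p m
  have hT1 : ∑ ij ∈ Finset.HasAntidiagonal.antidiagonal (m + 2),
      (ij.2 : ℂ) * (c + (ij.2 : ℂ) - 1) * (B p ij.1 * A a c ij.2)
      = (a + (m : ℂ) + 1) * (∑ ij ∈ Finset.HasAntidiagonal.antidiagonal (m + 1), B p ij.1 * A a c ij.2)
        - p * ∑ ij ∈ Finset.HasAntidiagonal.antidiagonal m, B p ij.1 * A a c ij.2 := by
    have h1 : ∑ ij ∈ Finset.HasAntidiagonal.antidiagonal (m + 2),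
        (ij.2 : ℂ) * (c + (ij.2 : ℂ) - 1) * (B p ij.1 * A a c ij.2)
        = ∑ ij ∈ Finset.HasAntidiagonal.antidiagonal (m + 1),
          ((a + (m : ℂ) + 1) * (B p ij.1 * A a c ij.2)
            - (ij.1 : ℂ) * (B p ij.1 * A a c ij.2)) := by
      rw [show m + 2 = (m + 1) + 1 from rfl, Finset.Nat.sum_antidiagonal_succ']
      simp only [Nat.cast_zero, zero_mul, mul_zero, zero_sub, zero_add, neg_zero]
      refine Finset.sum_congr rfl fun ij hij => ?_
      have hmem : ij.1 + ij.2 = m + 1 := Finset.HasAntidiagonal.mem_antidiagonal.mp hij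
      have hcast : (ij.1 : ℂ) + (ij.2 : ℂ) = (m : ℂ) + 1 := by
        exact_mod_cast congrArg (Nat.cast : ℕ → ℂ) hmem
      have hA := A_rec a c hc ij.2
      push_cast
      linear_combination B p ij.1 * hA + (B p ij.1 * A a c ij.2) * hcast
    rw [h1, Finset.sum_sub_distrib, key1, ← Finset.mul_sum]
  have hT2 : ∑ ij ∈ Finset.HasAntidiagonal.antidiagonal (m + 2),
      (ij.1 : ℂ) * (c + 2 * (ij.2 : ℂ) - 1) * (B p ij.1 * A a c ij.2)
      = p * (c + 2 * (m : ℂ) + 1)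
          * (∑ ij ∈ Finset.HasAntidiagonal.antidiagonal (m + 1), B p ij.1 * A a c ij.2)
        - 2 * p * (p * ∑ ij ∈ Finset.HasAntidiagonal.antidiagonal m, B p ij.1 * A a c ij.2) := by
    have h1 : ∑ ij ∈ Finset.HasAntidiagonal.antidiagonal (m + 2),
        (ij.1 : ℂ) * (c + 2 * (ij.2 : ℂ) - 1) * (B p ij.1 * A a c ij.2)
        = ∑ ij ∈ Finset.HasAntidiagonal.antidiagonal (m + 1),
          (p * (c + 2 * (m : ℂ) + 1) * (B p ij.1 * A a c ij.2)
            - 2 * p * ((ij.1 : ℂ) * (B p ij.1 * A a c ij.2))) := by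
      rw [show m + 2 = (m + 1) + 1 from rfl, Finset.Nat.sum_antidiagonal_succ]
      simp only [Nat.cast_zero, zero_mul, zero_add]
      refine Finset.sum_congr rfl fun ij hij => ?_
      have hmem : ij.1 + ij.2 = m + 1 := Finset.HasAntidiagonal.mem_antidiagonal.mp hij
      have hcast : (ij.1 : ℂ) + (ij.2 : ℂ) = (m : ℂ) + 1 := by
        exact_mod_cast congrArg (Nat.cast : ℕ → ℂ) hmem
      have hB := B_rec p ij.1
      push_cast
      linear_combination (c + 2 * (ij.2 : ℂ) - 1) * A a c ij.2 * hB
        + 2 * p * (B p ij.1 * A a c ij.2) * hcast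
    rw [h1, Finset.sum_sub_distrib, ← Finset.mul_sum, ← Finset.mul_sum, key1]
  have hT3 : ∑ ij ∈ Finset.HasAntidiagonal.antidiagonal (m + 2),
      (ij.1 : ℂ) * (ij.1 : ℂ) * (B p ij.1 * A a c ij.2)
      = p * (p * ∑ ij ∈ Finset.HasAntidiagonal.antidiagonal m, B p ij.1 * A a c ij.2)
        + p * ∑ ij ∈ Finset.HasAntidiagonal.antidiagonal (m + 1), B p ij.1 * A a c ij.2 := by
    have h1 : ∑ ij ∈ Finset.HasAntidiagonal.antidiagonal (m + 2),
        (ij.1 : ℂ) * (ij.1 : ℂ) * (B p ij.1 * A a c ij.2)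
        = ∑ ij ∈ Finset.HasAntidiagonal.antidiagonal (m + 1),
          (p * ((ij.1 : ℂ) * (B p ij.1 * A a c ij.2)) + p * (B p ij.1 * A a c ij.2)) := by
      rw [show m + 2 = (m + 1) + 1 from rfl, Finset.Nat.sum_antidiagonal_succ]
      simp only [Nat.cast_zero, zero_mul, zero_add]
      refine Finset.sum_congr rfl fun ij hij => ?_
      have hB := B_rec p ij.1
      push_cast
      linear_combination ((ij.1 : ℂ) + 1) * A a c ij.2 * hB
    rw [h1, Finset.sum_add_distrib, ← Finset.mul_sum, ← Finset.mul_sum, key1]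
  have hsplit : ((m : ℂ) + 2) * (c + (m : ℂ) + 1)
        * ∑ ij ∈ Finset.HasAntidiagonal.antidiagonal (m + 2), B p ij.1 * A a c ij.2
      = (∑ ij ∈ Finset.HasAntidiagonal.antidiagonal (m + 2),
          (ij.2 : ℂ) * (c + (ij.2 : ℂ) - 1) * (B p ij.1 * A a c ij.2))
        + (∑ ij ∈ Finset.HasAntidiagonal.antidiagonal (m + 2),
          (ij.1 : ℂ) * (c + 2 * (ij.2 : ℂ) - 1) * (B p ij.1 * A a c ij.2))
        + ∑ ij ∈ Finset.HasAntidiagonal.antidiagonal (m + 2),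
          (ij.1 : ℂ) * (ij.1 : ℂ) * (B p ij.1 * A a c ij.2) := by
    rw [Finset.mul_sum, ← Finset.sum_add_distrib, ← Finset.sum_add_distrib]
    refine Finset.sum_congr rfl fun ij hij => ?_
    have hmem : ij.1 + ij.2 = m + 2 := Finset.HasAntidiagonal.mem_antidiagonal.mp hij
    have hcast : (ij.1 : ℂ) + (ij.2 : ℂ) = (m : ℂ) + 2 := by
      exact_mod_cast congrArg (Nat.cast : ℕ → ℂ) hmem
    linear_combination (-(c + (ij.1 : ℂ) + (ij.2 : ℂ) + (m : ℂ) + 1)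
      * (B p ij.1 * A a c ij.2)) * hcast
  rw [hsplit, hT1, hT2, hT3]
  ring

lemma W_zero (a c p : ℂ) : W a c p 0 = 1 := by
  simp [W, A, B]

lemma W_one (a c p : ℂ) : W a c p 1 = a / c + p := by
  rw [W, show (1 : ℕ) = 0 + 1 from rfl, Finset.Nat.sum_antidiagonal_succ]
  simp [A, B, add_comm]

lemma eq_W (a c p : ℂ) (hc : ∀ n : ℕ, -c ≠ (n : ℂ)) (u : ℕ → ℂ)
    (hu0 : u 0 = 1) (hu1 : u 1 = a / c + p)
    (hrec : ∀ n : ℕ, 1 ≤ n →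
      u (n + 1) = (a + p * (c + 2 * (n : ℂ)) + (n : ℂ)) / (((n : ℂ) + 1) * (c + (n : ℂ))) * u n
        - p * (p + 1) / (((n : ℂ) + 1) * (c + (n : ℂ))) * u (n - 1)) :
    ∀ n, u n = W a c p n := by
  have key : ∀ n, u n = W a c p n ∧ u (n + 1) = W a c p (n + 1) := by
    intro n
    induction n with
    | zero => exact ⟨hu0.trans (W_zero a c p).symm, hu1.trans (W_one a c p).symm⟩
    | succ n ih =>
      refine ⟨ih.2, ?_⟩
      have hr := hrec (n + 1) (Nat.le_add_left 1 n)
      simp only [Nat.add_sub_cancel] at hr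
      push_cast at hr
      rw [hr, ih.1, ih.2]
      have hW := W_rec a c p hc n
      have hne1 : ((n : ℂ) + 1 + 1) ≠ 0 := by
        intro h
        exact Nat.cast_ne_zero.2 (by omega : n + 2 ≠ 0) (by push_cast; linear_combination h)
      have hne2 : (c + ((n : ℂ) + 1)) ≠ 0 := by
        intro h
        exact cadd_ne c hc (n + 1) (by push_cast; linear_combination h)
      field_simp
      linear_combination -hW
  exact fun n => (key n).1

lemma summable_B (p z : ℂ) : Summable fun i => ‖B p i * z ^ i‖ := by
  have h : ∀ i : ℕ, ‖B p i * z ^ i‖ = ‖p * z‖ ^ i / (Nat.factorial i : ℝ) := by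
    intro i
    simp [B, norm_div, norm_mul, norm_pow, mul_pow, div_mul_eq_mul_div]
  exact (funext h : _) ▸ Real.summable_pow_div_factorial ‖p * z‖

lemma summable_A (a c z : ℂ) (hc : ∀ n : ℕ, -c ≠ (n : ℂ)) :
    Summable fun k => ‖A a c k * z ^ k‖ := by
  apply summable_of_ratio_norm_eventually_le (r := 1 / 2) (by norm_num)
  simp only [norm_norm]
  rw [Filter.eventually_atTop]
  refine ⟨⌈‖c‖ + ‖a - c‖⌉₊ + ⌈4 * ‖z‖⌉₊ + 1, fun k hk => ?_⟩
  have hk1 : ‖c‖ + ‖a - c‖ ≤ (k : ℝ) := by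
    calc ‖c‖ + ‖a - c‖ ≤ (⌈‖c‖ + ‖a - c‖⌉₊ : ℝ) := Nat.le_ceil _
      _ ≤ (k : ℝ) := by exact_mod_cast Nat.le_of_lt (by omega)
  have hk3 : 4 * ‖z‖ ≤ (k : ℝ) + 1 := by
    calc 4 * ‖z‖ ≤ (⌈4 * ‖z‖⌉₊ : ℝ) := Nat.le_ceil _
      _ ≤ (k : ℝ) + 1 := by
        have : (⌈4 * ‖z‖⌉₊ : ℝ) ≤ (k : ℝ) := by exact_mod_cast Nat.le_of_lt (by omega)
        linarith
  have hck : ‖a - c‖ ≤ ‖c + (k : ℂ)‖ := by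
    have h1 : (k : ℝ) - ‖c‖ ≤ ‖c + (k : ℂ)‖ := by
      have h2 := norm_add_le (c + (k : ℂ)) (-c)
      have h0 : c + (k : ℂ) + -c = ((k : ℕ) : ℂ) := by ring
      rw [h0, norm_neg] at h2
      have hkn : ‖((k : ℕ) : ℂ)‖ = (k : ℝ) := by simp
      rw [hkn] at h2
      linarith
    linarith
  have hak : ‖a + (k : ℂ)‖ ≤ 2 * ‖c + (k : ℂ)‖ := by
    calc ‖a + (k : ℂ)‖ = ‖(a - c) + (c + (k : ℂ))‖ := by ring_nf
      _ ≤ ‖a - c‖ + ‖c + (k : ℂ)‖ := norm_add_le _ _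
      _ ≤ 2 * ‖c + (k : ℂ)‖ := by linarith
  have hcpos : 0 < ‖c + (k : ℂ)‖ := norm_pos_iff.2 (cadd_ne c hc k)
  have hne : ((k : ℂ) + 1) * (c + (k : ℂ)) ≠ 0 := by
    apply mul_ne_zero
    · intro h
      exact Nat.cast_ne_zero.2 (Nat.succ_ne_zero k) (by push_cast; linear_combination h)
    · exact cadd_ne c hc k
  have hrel : A a c (k + 1) * z ^ (k + 1)
      = ((a + (k : ℂ)) * z / (((k : ℂ) + 1) * (c + (k : ℂ)))) * (A a c k * z ^ k) := by
    have hA := A_rec a c hc k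
    have hA' : A a c (k + 1) = (a + (k : ℂ)) * A a c k / (((k : ℂ) + 1) * (c + (k : ℂ))) := by
      rw [eq_div_iff hne, mul_comm]; exact hA
    rw [hA', pow_succ]
    ring
  rw [hrel, norm_mul]
  have hfac : ‖(a + (k : ℂ)) * z / (((k : ℂ) + 1) * (c + (k : ℂ)))‖ ≤ 1 / 2 := by
    rw [norm_div, norm_mul, norm_mul]
    have hn1 : ‖(k : ℂ) + 1‖ = (k : ℝ) + 1 := by
      have h5 : ((k : ℂ) + 1) = ((k + 1 : ℕ) : ℂ) := by push_cast; ring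
      rw [h5, Complex.norm_natCast]
      push_cast; ring
    rw [hn1, div_le_iff₀ (by positivity)]
    nlinarith [norm_nonneg z, norm_nonneg (a + (k : ℂ)), hak, hk3, hcpos,
      mul_le_mul_of_nonneg_right hak (norm_nonneg z)]
  exact mul_le_mul_of_nonneg_right hfac (norm_nonneg _)

lemma exp_eq (p z : ℂ) : Complex.exp (p * z) = ∑' i, B p i * z ^ i := by
  rw [Complex.exp_eq_exp_ℂ, NormedSpace.exp_eq_tsum_div]
  refine tsum_congr fun i => ?_
  simp only [B, mul_pow, div_mul_eq_mul_div]

lemma M_eq (a c z : ℂ) : M a c z = ∑' k, A a c k * z ^ k := rfl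

lemma ad_sum (a c p z : ℂ) (n : ℕ) :
    (∑ kl ∈ Finset.HasAntidiagonal.antidiagonal n, (B p kl.1 * z ^ kl.1) * (A a c kl.2 * z ^ kl.2))
      = W a c p n * z ^ n := by
  rw [W, Finset.sum_mul]
  refine Finset.sum_congr rfl fun kl hkl => ?_
  have h : kl.1 + kl.2 = n := Finset.HasAntidiagonal.mem_antidiagonal.mp hkl
  rw [← h, pow_add]
  ring

lemma exp_mul_M (a c p z : ℂ) (hc : ∀ n : ℕ, -c ≠ (n : ℂ)) :
    Complex.exp (p * z) * M a c z = ∑' n, W a c p n * z ^ n := by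
  rw [exp_eq, M_eq,
    tsum_mul_tsum_eq_tsum_sum_antidiagonal_of_summable_norm (summable_B p z)
      (summable_A a c z hc)]
  exact tsum_congr (ad_sum a c p z)

lemma summable_W (a c p z : ℂ) (hc : ∀ n : ℕ, -c ≠ (n : ℂ)) :
    Summable fun n => W a c p n * z ^ n := by
  have h := (summable_norm_sum_mul_antidiagonal_of_summable_norm (summable_B p z)
    (summable_A a c z hc)).of_norm
  exact h.congr (ad_sum a c p z)

end HypAux

theorem stmt1 (a c p : ℂ) (hc : ∀ n : ℕ, -c ≠ (n : ℂ))
    (u v : ℕ → ℂ)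
    (hu0 : u 0 = 1) (hu1 : u 1 = a / c + p)
    (hv0 : v 0 = 1) (hv1 : v 1 = a / c - p)
    (hrecu : ∀ n : ℕ, 1 ≤ n →
      u (n + 1) = (a + p * (c + 2 * (n : ℂ)) + (n : ℂ)) / (((n : ℂ) + 1) * (c + (n : ℂ))) * u n
        - p * (p + 1) / (((n : ℂ) + 1) * (c + (n : ℂ))) * u (n - 1))
    (hrecv : ∀ n : ℕ, 1 ≤ n →
      v (n + 1) = (a - p * (c + 2 * (n : ℂ)) + (n : ℂ)) / (((n : ℂ) + 1) * (c + (n : ℂ))) * v n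
        - (p - 1) * p / (((n : ℂ) + 1) * (c + (n : ℂ))) * v (n - 1)) :
    ∀ z : ℂ, Complex.sinh (p * z) * M a c z = ∑' n : ℕ, (u n - v n) / 2 * z ^ n := by
  intro z
  have hU := HypAux.eq_W a c p hc u hu0 hu1 hrecu
  have hV : ∀ n, v n = HypAux.W a c (-p) n := by
    refine HypAux.eq_W a c (-p) hc v hv0 (by rw [hv1]; ring) fun n hn => ?_
    rw [hrecv n hn]
    ring
  have hsinh : Complex.sinh (p * z)
      = (Complex.exp (p * z) - Complex.exp (-p * z)) / 2 := by
    rw [Complex.sinh, neg_mul]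
  rw [hsinh, div_mul_eq_mul_div, sub_mul, HypAux.exp_mul_M a c p z hc,
    HypAux.exp_mul_M a c (-p) z hc,
    ← Summable.tsum_sub (HypAux.summable_W a c p z hc) (HypAux.summable_W a c (-p) z hc),
    ← tsum_div_const]
  refine tsum_congr fun n => ?_
  rw [hU n, hV n]
  ring
end

section
/- Let a, c, p ∈ ℂ with −c ∉ ℕ ∪ {0}. Define sequences (u_n) and (v_n) by u_0 = 1, u_1 = a/c + p, v_0 = 1, v_1 = a/c − p, and for n ≥ 1: u_{n+1} = ((a + p(c + 2n) + n)/((n+1)(c+n))) u_n − (p(p+1)/((n+1)(c+n))) u_{n−1}, and v_{n+1} = ((a − p(c + 2n) + n)/((n+1)(c+n))) v_n − ((p−1)p/((n+1)(c+n))) v_{n−1}. Then cosh(pz) M(a,c;z) = ∑_{n=0}^∞ ((u_n + v_n)/2) z^n for all z ∈ ℂ. -/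
open Complex Finset Polynomial

noncomputable def AA (a c : ℂ) (n : ℕ) : ℂ :=
  (ascPochhammer ℂ n).eval a / ((ascPochhammer ℂ n).eval c * (Nat.factorial n : ℂ))

noncomputable def PP (p : ℂ) (m : ℕ) : ℂ := p ^ m / (Nat.factorial m : ℂ)

noncomputable def ww (a c p : ℂ) (n : ℕ) : ℂ :=
  ∑ k ∈ Finset.range (n + 1), AA a c k * PP p (n - k)

lemma asc_eval_ne (c : ℂ) (hc : ∀ n : ℕ, -c ≠ (n : ℂ)) (n : ℕ) :
    (ascPochhammer ℂ n).eval c ≠ 0 := by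
  induction n with
  | zero => simp [ascPochhammer_zero]
  | succ n ih =>
    rw [ascPochhammer_succ_right]
    simp only [Polynomial.eval_mul, Polynomial.eval_add, Polynomial.eval_X,
      Polynomial.eval_natCast]
    refine mul_ne_zero ih ?_
    intro h
    exact hc n (by linear_combination -h)

lemma cadd_ne (c : ℂ) (hc : ∀ n : ℕ, -c ≠ (n : ℂ)) (n : ℕ) : c + (n : ℂ) ≠ 0 := by
  intro h; exact hc n (by linear_combination -h)

lemma natc_ne (k : ℕ) : ((k : ℂ) + 1) ≠ 0 := by
  exact_mod_cast (Nat.cast_ne_zero (R := ℂ)).2 (Nat.succ_ne_zero k)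

lemma AA_succ (a c : ℂ) (hc : ∀ n : ℕ, -c ≠ (n : ℂ)) (k : ℕ) :
    (a + k) * AA a c k = ((k : ℂ) + 1) * (c + k) * AA a c (k + 1) := by
  have h1 : (ascPochhammer ℂ k).eval c ≠ 0 := asc_eval_ne c hc k
  have h2 : (c + k) ≠ 0 := cadd_ne c hc k
  have h3 : (Nat.factorial k : ℂ) ≠ 0 := Nat.cast_ne_zero.2 (Nat.factorial_ne_zero k)
  have h4 : ((k : ℂ) + 1) ≠ 0 := natc_ne k
  unfold AA
  rw [ascPochhammer_succ_right]
  simp only [Polynomial.eval_mul, Polynomial.eval_add, Polynomial.eval_X,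
    Polynomial.eval_natCast, Nat.factorial_succ, Nat.cast_mul]
  field_simp
  push_cast
  ring

lemma PP_zero (p : ℂ) : PP p 0 = 1 := by simp [PP]
lemma PP_one (p : ℂ) : PP p 1 = p := by simp [PP]
lemma PP_succ (p : ℂ) (m : ℕ) : ((m : ℂ) + 1) * PP p (m + 1) = p * PP p m := by
  have h3 : (Nat.factorial m : ℂ) ≠ 0 := Nat.cast_ne_zero.2 (Nat.factorial_ne_zero m)
  have h4 : ((m : ℂ) + 1) ≠ 0 := natc_ne m
  unfold PP
  rw [Nat.factorial_succ, Nat.cast_mul, pow_succ]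
  field_simp
  push_cast
  ring

lemma sum_ite_range (M N : ℕ) (f : ℕ → ℂ) (h : N ≤ M) :
    ∑ k ∈ Finset.range M, (if k < N then f k else 0) = ∑ k ∈ Finset.range N, f k := by
  have hfil : Finset.filter (fun k => k < N) (Finset.range M) = Finset.range N := by
    ext x; simp only [Finset.mem_filter, Finset.mem_range]; omega
  rw [← Finset.sum_filter, hfil]

lemma ww_rec (a c p : ℂ) (hc : ∀ n : ℕ, -c ≠ (n : ℂ)) (n : ℕ) (hn : 1 ≤ n) :
    ((n : ℂ) + 1) * (c + (n : ℂ)) * ww a c p (n + 1)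
      = (a + p * (c + 2 * (n : ℂ)) + (n : ℂ)) * ww a c p n
        - p * (p + 1) * ww a c p (n - 1) := by
  obtain ⟨m, rfl⟩ : ∃ m, n = m + 1 := ⟨n - 1, by omega⟩
  simp only [Nat.add_sub_cancel]
  push_cast
  -- abbreviations
  set A : ℕ → ℂ := AA a c with hA
  -- the two padded summands
  set F : ℕ → ℂ := fun k =>
    ((m : ℂ) + 1 + 1) * (c + ((m : ℂ) + 1)) * (A k * PP p (m + 1 + 1 - k))
      + (if k < m + 1 then p * (p + 1) * (A k * PP p (m - k)) else 0) with hF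
  set G : ℕ → ℂ := fun k =>
    (k : ℂ) * (c + (k : ℂ) - 1) * (A k * PP p (m + 1 + 1 - k))
      + (if k < m + 1 + 1 then
          (p * (c + 2 * ((m : ℂ) + 1)) + ((m : ℂ) + 1) - (k : ℂ)) * (A k * PP p (m + 1 - k))
        else 0) with hG
  have key : ∑ k ∈ Finset.range (m + 1 + 1 + 1), F k = ∑ k ∈ Finset.range (m + 1 + 1 + 1), G k := by
    refine Finset.sum_congr rfl fun k hk => ?_
    rw [Finset.mem_range] at hk
    rcases lt_trichotomy k (m + 1) with hkm | hkm | hkm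
    · -- k ≤ m
      obtain ⟨j, hj⟩ : ∃ j, m = k + j := ⟨m - k, by omega⟩
      have i1 : m - k = j := by omega
      have i2 : m + 1 - k = j + 1 := by omega
      have i3 : m + 1 + 1 - k = j + 2 := by omega
      simp only [hF, hG, if_pos hkm, if_pos (by omega : k < m + 1 + 1), i1, i2, i3]
      have hmc : (m : ℂ) = (k : ℂ) + (j : ℂ) := by exact_mod_cast congrArg (Nat.cast (R := ℂ)) hj
      have h1 := PP_succ p j
      have h2 := PP_succ p (j + 1)
      push_cast at h2
      simp only [show j + 1 + 1 = j + 2 from rfl] at h2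
      rw [hmc]
      linear_combination ((c + 2 * (k : ℂ) + (j : ℂ) + 1) * A k) * h2 - ((p + 1) * A k) * h1
    · -- k = m + 1
      subst hkm
      simp only [hF, hG, if_neg (lt_irrefl _), if_pos (by omega : m + 1 < m + 1 + 1),
        show m + 1 + 1 - (m + 1) = 1 from by omega, show m + 1 - (m + 1) = 0 from by omega,
        PP_one, PP_zero]
      push_cast
      ring
    · -- k = m + 2
      have hk2 : k = m + 2 := by omega
      subst hk2
      simp only [hF, hG, if_neg (by omega : ¬(m + 2 < m + 1)),
        if_neg (by omega : ¬(m + 2 < m + 1 + 1)),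
        show m + 1 + 1 - (m + 2) = 0 from by omega]
      push_cast
      ring
  have expandF : ∑ k ∈ Finset.range (m + 1 + 1 + 1), F k
      = ((m : ℂ) + 1 + 1) * (c + ((m : ℂ) + 1)) * ww a c p (m + 1 + 1)
        + p * (p + 1) * ww a c p m := by
    simp only [hF]
    rw [Finset.sum_add_distrib, sum_ite_range _ _ _ (by omega), ← Finset.mul_sum,
      ← Finset.mul_sum]
    simp only [ww, hA]
  have hS1 : ∑ k ∈ Finset.range (m + 1 + 1 + 1), (k : ℂ) * (c + (k : ℂ) - 1) * (A k * PP p (m + 1 + 1 - k))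
      = ∑ k ∈ Finset.range (m + 1 + 1), ((k : ℂ) + 1) * (c + (k : ℂ)) * (A (k + 1) * PP p (m + 1 - k)) := by
    rw [Finset.sum_range_succ']
    simp only [Nat.cast_zero, zero_mul, zero_add, add_zero]
    refine Finset.sum_congr rfl fun i hi => ?_
    rw [Finset.mem_range] at hi
    have e : m + 1 + 1 - (i + 1) = m + 1 - i := by omega
    rw [e]
    push_cast
    ring
  have expandG : ∑ k ∈ Finset.range (m + 1 + 1 + 1), G k
      = (a + p * (c + 2 * ((m : ℂ) + 1)) + ((m : ℂ) + 1)) * ww a c p (m + 1) := by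
    simp only [hG]
    rw [Finset.sum_add_distrib, sum_ite_range _ _ _ (by omega), hS1, ww, Finset.mul_sum,
      ← Finset.sum_add_distrib]
    refine Finset.sum_congr rfl fun k hk => ?_
    have h := AA_succ a c hc k
    rw [hA]
    linear_combination (-(PP p (m + 1 - k))) * h
  linear_combination key - expandF + expandG

lemma ww_rec' (a c p : ℂ) (hc : ∀ n : ℕ, -c ≠ (n : ℂ)) (n : ℕ) (hn : 1 ≤ n) :
    ww a c p (n + 1)
      = (a + p * (c + 2 * (n : ℂ)) + (n : ℂ)) / (((n : ℂ) + 1) * (c + (n : ℂ))) * ww a c p n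
        - p * (p + 1) / (((n : ℂ) + 1) * (c + (n : ℂ))) * ww a c p (n - 1) := by
  have hD : ((n : ℂ) + 1) * (c + (n : ℂ)) ≠ 0 := mul_ne_zero (natc_ne n) (cadd_ne c hc n)
  have h := ww_rec a c p hc n hn
  rw [div_mul_eq_mul_div, div_mul_eq_mul_div, div_sub_div_same, eq_div_iff hD]
  linear_combination h

lemma ww_zero (a c p : ℂ) : ww a c p 0 = 1 := by
  simp [ww, AA, PP, ascPochhammer_zero]

lemma ww_one (a c p : ℂ) : ww a c p 1 = a / c + p := by
  rw [ww]
  rw [Finset.sum_range_succ, Finset.sum_range_one]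
  simp [AA, PP, ascPochhammer_zero, ascPochhammer_one]
  ring

lemma u_eq_ww (a c p : ℂ) (hc : ∀ n : ℕ, -c ≠ (n : ℂ)) (u : ℕ → ℂ)
    (hu0 : u 0 = 1) (hu1 : u 1 = a / c + p)
    (hrecu : ∀ n : ℕ, 1 ≤ n →
      u (n + 1) = (a + p * (c + 2 * (n : ℂ)) + (n : ℂ)) / (((n : ℂ) + 1) * (c + (n : ℂ))) * u n
        - p * (p + 1) / (((n : ℂ) + 1) * (c + (n : ℂ))) * u (n - 1)) :
    ∀ n, u n = ww a c p n := by
  have key : ∀ n, u n = ww a c p n ∧ u (n + 1) = ww a c p (n + 1) := by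
    intro n
    induction n with
    | zero => exact ⟨hu0.trans (ww_zero a c p).symm, hu1.trans (ww_one a c p).symm⟩
    | succ n ih =>
      refine ⟨ih.2, ?_⟩
      rw [hrecu (n + 1) (by omega), ww_rec' a c p hc (n + 1) (by omega)]
      rw [Nat.add_sub_cancel, ih.1, ih.2]
  exact fun n => (key n).1

lemma summable_norm_AA (a c z : ℂ) (hc : ∀ n : ℕ, -c ≠ (n : ℂ)) :
    Summable (fun n => ‖AA a c n * z ^ n‖) := by
  set N : ℕ := ⌈2 * ‖c‖ + ‖a‖ + 8 * ‖z‖⌉₊ + 1 with hN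
  refine summable_of_ratio_norm_eventually_le (r := 1 / 2) (by norm_num) ?_
  rw [Filter.eventually_atTop]
  refine ⟨N, fun k hk => ?_⟩
  have hD : ((k : ℂ) + 1) * (c + (k : ℂ)) ≠ 0 := mul_ne_zero (natc_ne k) (cadd_ne c hc k)
  have h := AA_succ a c hc k
  have hrel : AA a c (k + 1) * z ^ (k + 1)
      = (z * (a + (k : ℂ)) / (((k : ℂ) + 1) * (c + (k : ℂ)))) * (AA a c k * z ^ k) := by
    rw [pow_succ, div_mul_eq_mul_div, eq_div_iff hD]
    linear_combination (-(z ^ k * z)) * h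
  rw [Real.norm_of_nonneg (norm_nonneg _), Real.norm_of_nonneg (norm_nonneg _), hrel, norm_mul]
  refine mul_le_mul_of_nonneg_right ?_ (norm_nonneg _)
  -- bound the factor by 1/2
  have hkR : 2 * ‖c‖ + ‖a‖ + 8 * ‖z‖ ≤ (k : ℝ) := by
    calc 2 * ‖c‖ + ‖a‖ + 8 * ‖z‖ ≤ (⌈2 * ‖c‖ + ‖a‖ + 8 * ‖z‖⌉₊ : ℝ) := Nat.le_ceil _
    _ ≤ (k : ℝ) := by exact_mod_cast le_trans (Nat.le_succ _) hk
  have h1 : ‖a + (k : ℂ)‖ ≤ ‖a‖ + (k : ℝ) := by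
    calc ‖a + (k : ℂ)‖ ≤ ‖a‖ + ‖((k : ℕ) : ℂ)‖ := norm_add_le _ _
    _ = ‖a‖ + (k : ℝ) := by rw [Complex.norm_natCast]
  have h2 : (k : ℝ) - ‖c‖ ≤ ‖c + (k : ℂ)‖ := by
    have := norm_sub_norm_le ((k : ℕ) : ℂ) (-c)
    simp only [Complex.norm_natCast, norm_neg, sub_neg_eq_add] at this
    calc (k : ℝ) - ‖c‖ ≤ ‖(k : ℂ) + c‖ := this
    _ = ‖c + (k : ℂ)‖ := by rw [add_comm]
  rw [norm_div, norm_mul, norm_mul]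
  have hk1 : ‖(k : ℂ) + 1‖ = (k : ℝ) + 1 := by
    have : ((k : ℂ) + 1) = (((k + 1 : ℕ) : ℂ)) := by push_cast; ring
    rw [this, Complex.norm_natCast]; push_cast; ring
  rw [hk1]
  have hcpos : 0 < ‖c + (k : ℂ)‖ := norm_pos_iff.2 (cadd_ne c hc k)
  rw [div_le_iff₀ (by positivity)]
  have hz : 0 ≤ ‖z‖ := norm_nonneg _
  have hca : 0 ≤ ‖c‖ := norm_nonneg _
  have haa : 0 ≤ ‖a‖ := norm_nonneg _
  nlinarith [mul_le_mul_of_nonneg_left h1 hz, mul_le_mul_of_nonneg_left h2 (by positivity : (0:ℝ) ≤ ((k:ℝ)+1) / 2), sq_nonneg ((k:ℝ) - 8 * ‖z‖)]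

lemma summable_norm_expf (q : ℂ) : Summable (fun i => ‖q ^ i / (Nat.factorial i : ℂ)‖) := by
  refine (Real.summable_pow_div_factorial ‖q‖).congr fun i => ?_
  rw [norm_div, norm_pow, Complex.norm_natCast]

lemma exp_eq_tsum_div' (x : ℂ) : Complex.exp x = ∑' n : ℕ, x ^ n / (Nat.factorial n : ℂ) := by
  rw [Complex.exp_eq_exp_ℂ, NormedSpace.exp_eq_tsum_div]

lemma cauchy_term (a c q z : ℂ) (n : ℕ) :
    ∑ kl ∈ Finset.HasAntidiagonal.antidiagonal n, (q * z) ^ kl.1 / (Nat.factorial kl.1 : ℂ)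
        * (AA a c kl.2 * z ^ kl.2) = ww a c q n * z ^ n := by
  rw [Finset.Nat.sum_antidiagonal_eq_sum_range_succ_mk, ww, Finset.sum_mul,
    ← Finset.sum_range_reflect]
  refine Finset.sum_congr rfl fun j hj => ?_
  rw [Finset.mem_range] at hj
  have e1 : n + 1 - 1 - j = n - j := by omega
  have e2 : n - (n - j) = j := by omega
  rw [e1, e2]
  have hz : z ^ (n - j) * z ^ j = z ^ n := by
    rw [← pow_add]; congr 1; omega
  rw [mul_pow, PP]
  calc q ^ (n - j) * z ^ (n - j) / (Nat.factorial (n - j) : ℂ) * (AA a c j * z ^ j)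
      = AA a c j * (q ^ (n - j) / (Nat.factorial (n - j) : ℂ)) * (z ^ (n - j) * z ^ j) := by ring
  _ = AA a c j * (q ^ (n - j) / (Nat.factorial (n - j) : ℂ)) * z ^ n := by rw [hz]

lemma exp_mul_M (a c q z : ℂ) (hc : ∀ n : ℕ, -c ≠ (n : ℂ)) :
    Complex.exp (q * z) * M a c z = ∑' n : ℕ, ww a c q n * z ^ n := by
  have hf := summable_norm_expf (q * z)
  have hg := summable_norm_AA a c z hc
  rw [exp_eq_tsum_div', show M a c z = ∑' n : ℕ, AA a c n * z ^ n from rfl,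
    tsum_mul_tsum_eq_tsum_sum_antidiagonal_of_summable_norm hf hg]
  exact tsum_congr fun n => cauchy_term a c q z n

lemma summable_ww (a c q z : ℂ) (hc : ∀ n : ℕ, -c ≠ (n : ℂ)) :
    Summable (fun n => ww a c q n * z ^ n) := by
  have hf := summable_norm_expf (q * z)
  have hg := summable_norm_AA a c z hc
  have := (summable_norm_sum_mul_antidiagonal_of_summable_norm hf hg).of_norm
  exact this.congr fun n => cauchy_term a c q z n

theorem stmt2 (a c p : ℂ) (hc : ∀ n : ℕ, -c ≠ (n : ℂ))
    (u v : ℕ → ℂ)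
    (hu0 : u 0 = 1) (hu1 : u 1 = a / c + p)
    (hv0 : v 0 = 1) (hv1 : v 1 = a / c - p)
    (hrecu : ∀ n : ℕ, 1 ≤ n →
      u (n + 1) = (a + p * (c + 2 * (n : ℂ)) + (n : ℂ)) / (((n : ℂ) + 1) * (c + (n : ℂ))) * u n
        - p * (p + 1) / (((n : ℂ) + 1) * (c + (n : ℂ))) * u (n - 1))
    (hrecv : ∀ n : ℕ, 1 ≤ n →
      v (n + 1) = (a - p * (c + 2 * (n : ℂ)) + (n : ℂ)) / (((n : ℂ) + 1) * (c + (n : ℂ))) * v n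
        - (p - 1) * p / (((n : ℂ) + 1) * (c + (n : ℂ))) * v (n - 1)) :
    ∀ z : ℂ, Complex.cosh (p * z) * M a c z = ∑' n : ℕ, (u n + v n) / 2 * z ^ n := by
  have hu : ∀ n, u n = ww a c p n := u_eq_ww a c p hc u hu0 hu1 hrecu
  have hv : ∀ n, v n = ww a c (-p) n := by
    refine u_eq_ww a c (-p) hc v hv0 (by rw [hv1]; ring) fun n hn => ?_
    rw [hrecv n hn]; ring
  intro z
  have h1 := exp_mul_M a c p z hc
  have h2 := exp_mul_M a c (-p) z hc
  have s1 := summable_ww a c p z hc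
  have s2 := summable_ww a c (-p) z hc
  have hrhs : ∑' n : ℕ, (u n + v n) / 2 * z ^ n
      = ((∑' n : ℕ, ww a c p n * z ^ n) + ∑' n : ℕ, ww a c (-p) n * z ^ n) / 2 := by
    rw [← Summable.tsum_add s1 s2, ← tsum_div_const]
    refine tsum_congr fun n => ?_
    rw [hu n, hv n]; ring
  rw [hrhs, ← h1, ← h2, Complex.cosh]
  rw [show -p * z = -(p * z) by ring] at *
  ring
end

section
/- Let a, b, c, p ∈ ℂ with −c ∉ ℕ ∪ {0}. Define the sequence (u_n) as the Maclaurin coefficients of e^{pz} F(a,b;c;z), i.e. u_n = ∑_{k=0}^{n} (p^k / k!) · (a)_{n−k}(b)_{n−k} / ((c)_{n−k}(n−k)!), so that e^{pz} F(a,b;c;z) = ∑_{n=0}^∞ u_n z^n for |z| < 1. Then u_0 = 1, u_1 = ab/c + p, u_2 = a(1+a)b(1+b)/(2c(1+c)) + abp/c + p²/2, and for all n ≥ 2, u_{n+1} = (((a+n)(b+n) + p(c+2n))/((n+1)(c+n))) u_n − ((p(a+b+2n+p−1))/((n+1)(c+n))) u_{n−1} + (p²/((n+1)(c+n))) u_{n−2}.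 -/
open Complex Finset Polynomial

noncomputable def cfa (a b c : ℂ) (m : ℕ) : ℂ :=
  (ascPochhammer ℂ m).eval a * (ascPochhammer ℂ m).eval b /
    ((ascPochhammer ℂ m).eval c * (Nat.factorial m : ℂ))

noncomputable def efa (p : ℂ) (k : ℕ) : ℂ := p ^ k / (Nat.factorial k : ℂ)

lemma hcn_aux {c : ℂ} (hc : ∀ n : ℕ, -c ≠ (n : ℂ)) (n : ℕ) : c + (n : ℂ) ≠ 0 :=
  fun h => hc n (by linear_combination -h)

lemma poch_ne_zero {c : ℂ} (hc : ∀ n : ℕ, -c ≠ (n : ℂ)) (m : ℕ) :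
    (ascPochhammer ℂ m).eval c ≠ 0 := by
  induction m with
  | zero => simp
  | succ n ih =>
    rw [ascPochhammer_succ_eval]
    exact mul_ne_zero ih (hcn_aux hc n)

lemma efa_rec (p : ℂ) (k : ℕ) : ((k : ℂ) + 1) * efa p (k + 1) = p * efa p k := by
  have h : ((Nat.factorial k : ℕ) : ℂ) ≠ 0 := Nat.cast_ne_zero.mpr (Nat.factorial_ne_zero k)
  have h1 : ((k : ℂ) + 1) ≠ 0 := Nat.cast_add_one_ne_zero k
  simp only [efa, Nat.factorial_succ]
  push_cast
  field_simp
  ring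

lemma cfa_rec {c : ℂ} (a b : ℂ) (hc : ∀ n : ℕ, -c ≠ (n : ℂ)) (m : ℕ) :
    ((m : ℂ) + 1) * (c + (m : ℂ)) * cfa a b c (m + 1) = (a + (m : ℂ)) * (b + (m : ℂ)) * cfa a b c m := by
  have h : ((Nat.factorial m : ℕ) : ℂ) ≠ 0 := Nat.cast_ne_zero.mpr (Nat.factorial_ne_zero m)
  have h1 : ((m : ℂ) + 1) ≠ 0 := Nat.cast_add_one_ne_zero m
  have h2 := poch_ne_zero hc m
  have h3 := hcn_aux hc m
  simp only [cfa, Nat.factorial_succ, ascPochhammer_succ_eval]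
  push_cast
  field_simp

lemma key_rec {c : ℂ} (a b p : ℂ) (hc : ∀ n : ℕ, -c ≠ (n : ℂ)) (m : ℕ) :
    ((m : ℂ) + 3) * (c + (m : ℂ) + 2) *
        (∑ q ∈ Finset.HasAntidiagonal.antidiagonal (m + 3), efa p q.1 * cfa a b c q.2) =
      ((a + ((m : ℂ) + 2)) * (b + ((m : ℂ) + 2)) + p * (c + 2 * ((m : ℂ) + 2))) *
        (∑ q ∈ Finset.HasAntidiagonal.antidiagonal (m + 2), efa p q.1 * cfa a b c q.2)
      - p * (a + b + 2 * ((m : ℂ) + 2) + p - 1) *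
        (∑ q ∈ Finset.HasAntidiagonal.antidiagonal (m + 1), efa p q.1 * cfa a b c q.2)
      + p ^ 2 * (∑ q ∈ Finset.HasAntidiagonal.antidiagonal m, efa p q.1 * cfa a b c q.2) := by
  set T : ℕ × ℕ → ℂ := fun q => efa p q.1 * cfa a b c q.2 with hT
  -- h1 : split LHS over antidiagonal (m+2)
  have h1 : ((m : ℂ) + 3) * (c + (m : ℂ) + 2) * (∑ q ∈ Finset.HasAntidiagonal.antidiagonal (m + 3), T q) =
      (∑ q ∈ Finset.HasAntidiagonal.antidiagonal (m + 2), ((a + q.2) * (b + q.2)) * T q)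
      + (∑ q ∈ Finset.HasAntidiagonal.antidiagonal (m + 2), (p * (c + 2 * q.2 + q.1)) * T q) := by
    have e1 : ((m : ℂ) + 3) * (c + (m : ℂ) + 2) * (∑ q ∈ Finset.HasAntidiagonal.antidiagonal (m + 3), T q) =
        ∑ q ∈ Finset.HasAntidiagonal.antidiagonal (m + 3),
          (((q.2 : ℂ)) * (c + q.2 - 1) * T q + (q.1 : ℂ) * (c + 2 * q.2 + q.1 - 1) * T q) := by
      rw [Finset.mul_sum]
      refine Finset.sum_congr rfl fun q hq => ?_
      rw [Finset.HasAntidiagonal.mem_antidiagonal] at hq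
      have hq' : ((q.1 : ℂ) + q.2) = (m : ℂ) + 3 := by exact_mod_cast congrArg (Nat.cast : ℕ → ℂ) hq
      have hm : (m : ℂ) = (q.1 : ℂ) + q.2 - 3 := by linear_combination -hq'
      rw [hm]; ring
    rw [e1, Finset.sum_add_distrib]
    congr 1
    · rw [show m + 3 = (m + 2) + 1 from rfl, Finset.Nat.sum_antidiagonal_succ']
      simp only [Nat.cast_zero, zero_mul, zero_add]
      refine Finset.sum_congr rfl fun q _ => ?_
      have hrec := cfa_rec a b hc q.2
      simp only [hT]
      push_cast
      linear_combination (efa p q.1) * hrec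
    · rw [show m + 3 = (m + 2) + 1 from rfl, Finset.Nat.sum_antidiagonal_succ]
      rw [show ((0:ℕ) : ℂ) * (c + 2 * ((m + 2 + 1 : ℕ) : ℂ) + ((0:ℕ):ℂ) - 1) * T (0, m + 2 + 1) = 0
        by push_cast; ring, zero_add]
      refine Finset.sum_congr rfl fun q _ => ?_
      have hrec := efa_rec p q.1
      simp only [hT]
      push_cast
      linear_combination (c + 2 * (q.2:ℂ) + q.1) * (cfa a b c q.2) * hrec
  -- h2 : expand first RHS term
  have h2 : ((a + ((m : ℂ) + 2)) * (b + ((m : ℂ) + 2)) + p * (c + 2 * ((m : ℂ) + 2))) *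
      (∑ q ∈ Finset.HasAntidiagonal.antidiagonal (m + 2), T q) =
      ∑ q ∈ Finset.HasAntidiagonal.antidiagonal (m + 2),
        ((a + ((q.1:ℂ) + q.2)) * (b + ((q.1:ℂ) + q.2)) + p * (c + 2 * ((q.1:ℂ) + q.2))) * T q := by
    rw [Finset.mul_sum]
    refine Finset.sum_congr rfl fun q hq => ?_
    rw [Finset.HasAntidiagonal.mem_antidiagonal] at hq
    have hq' : ((q.1 : ℂ) + q.2) = (m : ℂ) + 2 := by exact_mod_cast congrArg (Nat.cast : ℕ → ℂ) hq
    have hm : (m : ℂ) = (q.1 : ℂ) + q.2 - 2 := by linear_combination -hq'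
    rw [hm]; ring
  -- h6 : difference
  have h6 : (∑ q ∈ Finset.HasAntidiagonal.antidiagonal (m + 2),
        ((a + ((q.1:ℂ) + q.2)) * (b + ((q.1:ℂ) + q.2)) + p * (c + 2 * ((q.1:ℂ) + q.2))) * T q)
      - ((∑ q ∈ Finset.HasAntidiagonal.antidiagonal (m + 2), ((a + q.2) * (b + q.2)) * T q)
        + (∑ q ∈ Finset.HasAntidiagonal.antidiagonal (m + 2), (p * (c + 2 * q.2 + q.1)) * T q)) =
      ∑ q ∈ Finset.HasAntidiagonal.antidiagonal (m + 2), (q.1 : ℂ) * (a + b + 2 * q.2 + q.1 + p) * T q := by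
    rw [← Finset.sum_add_distrib, ← Finset.sum_sub_distrib]
    exact Finset.sum_congr rfl fun q _ => by ring
  -- h3
  have h3 : (∑ q ∈ Finset.HasAntidiagonal.antidiagonal (m + 2), (q.1 : ℂ) * (a + b + 2 * q.2 + q.1 + p) * T q) =
      p * ∑ q ∈ Finset.HasAntidiagonal.antidiagonal (m + 1), (a + b + 2 * q.2 + q.1 + 1 + p) * T q := by
    rw [show m + 2 = (m + 1) + 1 from rfl, Finset.Nat.sum_antidiagonal_succ]
    rw [show ((0:ℕ) : ℂ) * (a + b + 2 * ((m + 1 + 1 : ℕ) : ℂ) + ((0:ℕ):ℂ) + p) * T (0, m + 1 + 1) = 0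
      by push_cast; ring, zero_add, Finset.mul_sum]
    refine Finset.sum_congr rfl fun q _ => ?_
    have hrec := efa_rec p q.1
    simp only [hT]
    push_cast
    linear_combination (a + b + 2 * (q.2:ℂ) + q.1 + 1 + p) * (cfa a b c q.2) * hrec
  -- h4
  have h4 : (∑ q ∈ Finset.HasAntidiagonal.antidiagonal (m + 1), (a + b + 2 * q.2 + (q.1:ℂ) + 1 + p) * T q) =
      (a + b + 2 * (m:ℂ) + 3 + p) * (∑ q ∈ Finset.HasAntidiagonal.antidiagonal (m + 1), T q)
      - ∑ q ∈ Finset.HasAntidiagonal.antidiagonal (m + 1), (q.1 : ℂ) * T q := by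
    rw [Finset.mul_sum, ← Finset.sum_sub_distrib]
    refine Finset.sum_congr rfl fun q hq => ?_
    rw [Finset.HasAntidiagonal.mem_antidiagonal] at hq
    have hq' : ((q.1 : ℂ) + q.2) = (m : ℂ) + 1 := by exact_mod_cast congrArg (Nat.cast : ℕ → ℂ) hq
    have hm : (m : ℂ) = (q.1 : ℂ) + q.2 - 1 := by linear_combination -hq'
    rw [hm]; ring
  -- h5
  have h5 : (∑ q ∈ Finset.HasAntidiagonal.antidiagonal (m + 1), (q.1 : ℂ) * T q) =
      p * ∑ q ∈ Finset.HasAntidiagonal.antidiagonal m, T q := by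
    rw [Finset.Nat.sum_antidiagonal_succ]
    rw [show ((0:ℕ) : ℂ) * T (0, m + 1) = 0 by push_cast; ring, zero_add, Finset.mul_sum]
    refine Finset.sum_congr rfl fun q _ => ?_
    have hrec := efa_rec p q.1
    simp only [hT]
    push_cast
    linear_combination (cfa a b c q.2) * hrec
  linear_combination h1 - h2 - h6 - h3 - p * h4 + p * h5

open Filter Topology in
lemma tinv_aux (w : ℂ) : Tendsto (fun n : ℕ => (w + (n : ℂ))⁻¹) atTop (𝓝 0) := by
  have hnorm : Tendsto (fun n : ℕ => ‖w + (n : ℂ)‖) atTop atTop := by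
    refine tendsto_atTop_mono' atTop ?_
      (tendsto_atTop_add_const_right atTop (-‖w‖) tendsto_natCast_atTop_atTop)
    filter_upwards with n
    have : ‖(n : ℂ)‖ ≤ ‖w + n‖ + ‖w‖ := by
      calc ‖(n : ℂ)‖ = ‖(w + n) - w‖ := by ring_nf
        _ ≤ ‖w + n‖ + ‖w‖ := norm_sub_le _ _
    have hn : ‖(n : ℂ)‖ = (n : ℝ) := by simp
    simp only [hn] at this
    linarith
  rw [tendsto_zero_iff_norm_tendsto_zero]
  simpa only [norm_inv, Pi.inv_def] using hnorm.inv_tendsto_atTop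

open Filter Topology in
lemma ratio_tendsto {c : ℂ} (a b : ℂ) (hc : ∀ n : ℕ, -c ≠ (n : ℂ)) :
    Tendsto (fun n : ℕ => (a + (n : ℂ)) * (b + (n : ℂ)) / (((n : ℂ) + 1) * (c + (n : ℂ))))
      atTop (𝓝 1) := by
  have t1 : Tendsto (fun n : ℕ => (a + (n : ℂ)) / ((n : ℂ) + 1)) atTop (𝓝 1) := by
    have h := (tinv_aux 1).const_mul (a - 1)
    have h2 : Tendsto (fun n : ℕ => 1 + (a - 1) * ((1 : ℂ) + n)⁻¹) atTop (𝓝 1) := by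
      simpa using tendsto_const_nhds.add h
    refine h2.congr fun n => ?_
    have hn : ((n : ℂ) + 1) ≠ 0 := Nat.cast_add_one_ne_zero n
    have hn2 : ((1 : ℂ) + n) ≠ 0 := by rw [add_comm]; exact hn
    field_simp
    ring
  have t2 : Tendsto (fun n : ℕ => (b + (n : ℂ)) / (c + (n : ℂ))) atTop (𝓝 1) := by
    have h := (tinv_aux c).const_mul (b - c)
    have h2 : Tendsto (fun n : ℕ => 1 + (b - c) * (c + (n : ℂ))⁻¹) atTop (𝓝 1) := by
      simpa using tendsto_const_nhds.add h
    refine h2.congr fun n => ?_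
    have hn : (c + (n : ℂ)) ≠ 0 := hcn_aux hc n
    field_simp
    ring
  have := t1.mul t2
  rw [one_mul] at this
  refine this.congr fun n => ?_
  rw [div_mul_div_comm]

lemma cfa_rec' {c : ℂ} (a b : ℂ) (hc : ∀ n : ℕ, -c ≠ (n : ℂ)) (m : ℕ) :
    cfa a b c (m + 1) =
      (a + (m : ℂ)) * (b + (m : ℂ)) / (((m : ℂ) + 1) * (c + (m : ℂ))) * cfa a b c m := by
  have h1 : ((m : ℂ) + 1) ≠ 0 := Nat.cast_add_one_ne_zero m
  have h3 := hcn_aux hc m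
  have := cfa_rec a b hc m
  field_simp
  linear_combination this

lemma cfa_zero_of_le {c : ℂ} (a b : ℂ) (hc : ∀ n : ℕ, -c ≠ (n : ℂ)) {M n : ℕ}
    (h0 : cfa a b c M = 0) (h : M ≤ n) : cfa a b c n = 0 := by
  induction n with
  | zero => simpa [Nat.le_zero.mp h] using h0
  | succ k ih =>
    rcases Nat.lt_or_ge M (k + 1) with hlt | hge
    · rw [cfa_rec' a b hc k, ih (Nat.lt_succ_iff.mp hlt), mul_zero]
    · have : M = k + 1 := le_antisymm h hge
      rw [← this]; exact h0

open Filter Topology in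
lemma summable_cfa {c : ℂ} (a b : ℂ) (hc : ∀ n : ℕ, -c ≠ (n : ℂ)) {z : ℂ} (hz : ‖z‖ < 1) :
    Summable fun n => ‖cfa a b c n * z ^ n‖ := by
  by_cases hz0 : z = 0
  · rw [← summable_nat_add_iff 1]
    refine summable_zero.congr fun n => ?_
    simp [hz0]
  by_cases hall : ∀ n, cfa a b c n ≠ 0
  · set f : ℕ → ℝ := fun n => ‖cfa a b c n * z ^ n‖ with hf
    have hfne : ∀ n, f n ≠ 0 := fun n =>
      norm_ne_zero_iff.mpr (mul_ne_zero (hall n) (pow_ne_zero n hz0))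
    have hfs : ∀ n, f (n + 1) =
        ‖(a + (n : ℂ)) * (b + (n : ℂ)) / (((n : ℂ) + 1) * (c + (n : ℂ))) * z‖ * f n := by
      intro n
      have : cfa a b c (n + 1) * z ^ (n + 1) =
          ((a + (n : ℂ)) * (b + (n : ℂ)) / (((n : ℂ) + 1) * (c + (n : ℂ))) * z) *
            (cfa a b c n * z ^ n) := by
        rw [cfa_rec' a b hc n, pow_succ]; ring
      rw [hf]; simp only [this, norm_mul]
  -- tendsto of the ratio
    have hrt : Tendsto (fun n : ℕ =>
        ‖(a + (n : ℂ)) * (b + (n : ℂ)) / (((n : ℂ) + 1) * (c + (n : ℂ))) * z‖) atTop (𝓝 ‖z‖) := by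
      have := (ratio_tendsto a b hc).mul_const z
      rw [one_mul] at this
      exact this.norm
    have key : Tendsto (fun n => ‖f (n + 1)‖ / ‖f n‖) atTop (𝓝 ‖z‖) := by
      refine hrt.congr fun n => ?_
      have h1 := hfs n
      simp only [hf] at h1
      rw [Real.norm_eq_abs, Real.norm_eq_abs, _root_.abs_of_nonneg (norm_nonneg _),
        _root_.abs_of_nonneg (norm_nonneg _), h1]
      exact (mul_div_cancel_right₀ _ (hfne n)).symm
    have := summable_of_ratio_test_tendsto_lt_one hz (Eventually.of_forall hfne) key
    exact this
  · push_neg at hall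
    obtain ⟨M, hM⟩ := hall
    rw [← summable_nat_add_iff M]
    refine summable_zero.congr fun n => ?_
    rw [cfa_zero_of_le a b hc hM (Nat.le_add_left M n)]
    simp

lemma summable_efa (p z : ℂ) : Summable fun k => ‖efa p k * z ^ k‖ := by
  refine (Real.summable_pow_div_factorial ‖p * z‖).congr fun k => ?_
  simp only [efa, norm_mul, norm_div, norm_pow, Complex.norm_natCast, mul_pow]
  rw [div_mul_eq_mul_div]

lemma exp_eq_tsum_efa (p z : ℂ) : Complex.exp (p * z) = ∑' k, efa p k * z ^ k := by
  rw [Complex.exp_eq_exp_ℂ, NormedSpace.exp_eq_tsum_div]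
  exact tsum_congr fun k => by rw [efa, mul_pow, div_mul_eq_mul_div, mul_comm (p ^ k)]
noncomputable def F (a b c z : ℂ) : ℂ :=
  ∑' n : ℕ, (ascPochhammer ℂ n).eval a * (ascPochhammer ℂ n).eval b /
    ((ascPochhammer ℂ n).eval c * (Nat.factorial n : ℂ)) * z ^ n

theorem stmt10 (a b c p : ℂ) (hc : ∀ n : ℕ, -c ≠ (n : ℂ))
    (u : ℕ → ℂ)
    (hu : ∀ n : ℕ, u n = ∑ k ∈ Finset.range (n + 1),
      p ^ k / (Nat.factorial k : ℂ) *
        ((ascPochhammer ℂ (n - k)).eval a * (ascPochhammer ℂ (n - k)).eval b /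
          ((ascPochhammer ℂ (n - k)).eval c * (Nat.factorial (n - k) : ℂ)))) :
    (∀ z : ℂ, ‖z‖ < 1 → Complex.exp (p * z) * F a b c z = ∑' n : ℕ, u n * z ^ n) ∧
    u 0 = 1 ∧ u 1 = a * b / c + p ∧
    u 2 = a * (1 + a) * b * (1 + b) / (2 * c * (1 + c)) + a * b * p / c + p ^ 2 / 2 ∧
    ∀ n : ℕ, 2 ≤ n →
      u (n + 1) = ((a + (n : ℂ)) * (b + (n : ℂ)) + p * (c + 2 * (n : ℂ))) /
          (((n : ℂ) + 1) * (c + (n : ℂ))) * u n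
        - p * (a + b + 2 * (n : ℂ) + p - 1) / (((n : ℂ) + 1) * (c + (n : ℂ))) * u (n - 1)
        + p ^ 2 / (((n : ℂ) + 1) * (c + (n : ℂ))) * u (n - 2) := by
  have h0 : c ≠ 0 := by simpa using hcn_aux hc 0
  have h1 : c + 1 ≠ 0 := by simpa using hcn_aux hc 1
  refine ⟨?_, ?_, ?_, ?_, ?_⟩
  · intro z hz
    have hF : F a b c z = ∑' n, cfa a b c n * z ^ n := rfl
    rw [exp_eq_tsum_efa, hF,
      tsum_mul_tsum_eq_tsum_sum_range_of_summable_norm (summable_efa p z)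
        (summable_cfa a b hc hz)]
    refine tsum_congr fun n => ?_
    rw [hu n, Finset.sum_mul]
    refine Finset.sum_congr rfl fun k hk => ?_
    have hkn : k ≤ n := Nat.lt_succ_iff.mp (Finset.mem_range.mp hk)
    simp only [efa, cfa]
    rw [show z ^ n = z ^ k * z ^ (n - k) from by rw [← pow_add, Nat.add_sub_cancel' hkn]]
    ring
  · rw [hu 0]
    norm_num [Finset.sum_range_succ]
  · rw [hu 1]
    norm_num [Finset.sum_range_succ, ascPochhammer_one]
  · have h1' : 1 + c ≠ 0 := by rwa [add_comm]
    rw [hu 2]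
    norm_num [Finset.sum_range_succ, ascPochhammer_succ_eval, ascPochhammer_one]
    field_simp
    ring
  · intro n hn
    obtain ⟨m, rfl⟩ : ∃ m, n = m + 2 := ⟨n - 2, (Nat.sub_add_cancel hn).symm⟩
    have hu' : ∀ N : ℕ, u N = ∑ q ∈ Finset.HasAntidiagonal.antidiagonal N, efa p q.1 * cfa a b c q.2 := by
      intro N
      rw [hu N]
      exact (Finset.Nat.sum_antidiagonal_eq_sum_range_succ_mk
        (fun q => efa p q.1 * cfa a b c q.2) N).symm
    have hkey := key_rec a b p hc m
    have hne1 : ((m : ℂ) + 2 + 1) ≠ 0 := by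
      have h : ((m + 3 : ℕ) : ℂ) ≠ 0 := Nat.cast_ne_zero.mpr (by omega)
      push_cast at h
      intro hx; exact h (by linear_combination hx)
    have hne2 : (c + ((m : ℂ) + 2)) ≠ 0 := by
      have h := hcn_aux hc (m + 2)
      push_cast at h
      intro hx; exact h (by linear_combination hx)
    rw [show m + 2 + 1 = m + 3 from rfl, show m + 2 - 1 = m + 1 from rfl,
      show m + 2 - 2 = m from rfl, hu' (m + 3), hu' (m + 2), hu' (m + 1), hu' m]
    push_cast
    simp only [div_mul_eq_mul_div]
    rw [div_sub_div_same, ← add_div, eq_div_iff (mul_ne_zero hne1 hne2)]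
    linear_combination hkey
end

section
/- Let a, b, c, p ∈ ℂ with −c ∉ ℕ ∪ {0}. Define sequences (u_n) and (v_n) by u_0 = 1, u_1 = ab/c + p, u_2 = a(1+a)b(1+b)/(2c(1+c)) + abp/c + p²/2, v_0 = 1, v_1 = ab/c − p, v_2 = a(1+a)b(1+b)/(2c(1+c)) − abp/c + p²/2, and for n ≥ 2: u_{n+1} = (((a+n)(b+n) + p(c+2n))/((n+1)(c+n))) u_n − (p(a+b+2n+p−1)/((n+1)(c+n))) u_{n−1} + (p²/((n+1)(c+n))) u_{n−2}, and v_{n+1} = (((a+n)(b+n) − p(c+2n))/((n+1)(c+n))) v_n + (p(a+b+2n−p−1)/((n+1)(c+n))) v_{n−1} + (p²/((n+1)(c+n))) v_{n−2}. Then cosh(pz) F(a,b;c;z) = ∑_{n=0}^∞ ((u_n + v_n)/2) z^n for |z| < 1. -/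
open Complex Finset Polynomial

namespace S12

noncomputable def f (a b c : ℂ) (k : ℕ) : ℂ :=
  (ascPochhammer ℂ k).eval a * (ascPochhammer ℂ k).eval b /
    ((ascPochhammer ℂ k).eval c * (Nat.factorial k : ℂ))

noncomputable def g (q : ℂ) (m : ℕ) : ℂ := q ^ m / (Nat.factorial m : ℂ)

noncomputable def conv (h : ℕ → ℂ) (q : ℂ) (n : ℕ) : ℂ :=
  ∑ k ∈ range (n + 1), h k * g q (n - k)

noncomputable def D (h : ℕ → ℂ) (k : ℕ) : ℂ := ((k : ℂ) + 1) * h (k + 1)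

lemma cadd_ne (c : ℂ) (hc : ∀ n : ℕ, -c ≠ (n : ℂ)) (k : ℕ) : c + (k : ℂ) ≠ 0 := by
  intro h
  exact hc k (by linear_combination -h)

lemma poch_ne (c : ℂ) (hc : ∀ n : ℕ, -c ≠ (n : ℂ)) (k : ℕ) :
    (ascPochhammer ℂ k).eval c ≠ 0 := by
  induction k with
  | zero => simp
  | succ n ih =>
    rw [ascPochhammer_succ_eval]
    exact mul_ne_zero ih (cadd_ne c hc n)

lemma f_rec (a b c : ℂ) (hc : ∀ n : ℕ, -c ≠ (n : ℂ)) (k : ℕ) :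
    ((k : ℂ) + 1) * (c + k) * f a b c (k + 1) = (a + k) * (b + k) * f a b c k := by
  have h1 := poch_ne c hc k
  have h2 := cadd_ne c hc k
  have h3 : ((Nat.factorial k : ℂ)) ≠ 0 := Nat.cast_ne_zero.2 (Nat.factorial_ne_zero k)
  have h4 : ((k : ℂ) + 1) ≠ 0 := Nat.cast_add_one_ne_zero k
  unfold f
  rw [ascPochhammer_succ_eval, ascPochhammer_succ_eval, ascPochhammer_succ_eval,
    Nat.factorial_succ]
  push_cast
  field_simp

lemma g_rec (q : ℂ) (m : ℕ) : ((m : ℂ) + 1) * g q (m + 1) = q * g q m := by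
  have h3 : ((Nat.factorial m : ℂ)) ≠ 0 := Nat.cast_ne_zero.2 (Nat.factorial_ne_zero m)
  have h4 : ((m : ℂ) + 1) ≠ 0 := Nat.cast_add_one_ne_zero m
  unfold g
  rw [Nat.factorial_succ]
  push_cast
  field_simp
  ring

lemma shift (h : ℕ → ℂ) (q : ℂ) (n : ℕ) :
    conv (fun k => (k : ℂ) * h k) q (n + 1) = conv (D h) q n := by
  unfold conv
  rw [Finset.sum_range_succ' (fun k => (k : ℂ) * h k * g q (n + 1 - k)) (n + 1)]
  simp only [Nat.cast_zero, zero_mul, Nat.cast_add, Nat.cast_one, add_zero]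
  refine Finset.sum_congr rfl fun k hk => ?_
  have : n + 1 - (k + 1) = n - k := by omega
  rw [this]
  unfold D
  ring

lemma genstar (h : ℕ → ℂ) (q : ℂ) (n : ℕ) :
    ((n : ℂ) + 1) * conv h q (n + 1) = q * conv h q n + conv (D h) q n := by
  have key : ∀ k ∈ range (n + 2), ((n : ℂ) + 1) * (h k * g q (n + 1 - k)) =
      ((n + 1 - k : ℕ) : ℂ) * (h k * g q (n + 1 - k)) + (k : ℂ) * (h k * g q (n + 1 - k)) := by
    intro k hk
    rw [Finset.mem_range] at hk
    have : ((n + 1 - k : ℕ) : ℂ) = (n : ℂ) + 1 - k := by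
      have hk' : k ≤ n + 1 := by omega
      push_cast [Nat.cast_sub hk']
      ring
    rw [this]; ring
  unfold conv
  rw [Finset.mul_sum, Finset.sum_congr rfl key, Finset.sum_add_distrib]
  congr 1
  · -- first sum equals q * ∑
    rw [Finset.sum_range_succ]
    simp only [Nat.sub_self, Nat.cast_zero, zero_mul, add_zero]
    rw [Finset.mul_sum]
    refine Finset.sum_congr rfl fun k hk => ?_
    rw [Finset.mem_range] at hk
    have h1 : n + 1 - k = (n - k) + 1 := by omega
    rw [h1]
    have := g_rec q (n - k)
    have h2 : ((n - k : ℕ) : ℂ) = ((n - k : ℕ) : ℂ) := rfl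
    calc ((n - k + 1 : ℕ) : ℂ) * (h k * g q (n - k + 1))
        = h k * (((n - k : ℕ) : ℂ) + 1) * g q ((n - k) + 1) := by push_cast; ring
      _ = q * (h k * g q (n - k)) := by rw [mul_assoc, g_rec q (n - k)]; ring
  · -- second sum equals conv (D h) q n
    rw [Finset.sum_range_succ' (fun k => (k : ℂ) * (h k * g q (n + 1 - k))) (n + 1)]
    simp only [Nat.cast_zero, zero_mul, add_zero, Nat.cast_add, Nat.cast_one]
    refine Finset.sum_congr rfl fun k hk => ?_
    have : n + 1 - (k + 1) = n - k := by omega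
    rw [this]
    unfold D
    ring

end S12

namespace S12

lemma wrec (a b c q : ℂ) (hc : ∀ n : ℕ, -c ≠ (n : ℂ)) (m : ℕ) :
    ((m : ℂ) + 3) * (c + ((m : ℂ) + 2)) * conv (f a b c) q (m + 3) =
      ((a + ((m : ℂ) + 2)) * (b + ((m : ℂ) + 2)) + q * (c + 2 * ((m : ℂ) + 2))) *
          conv (f a b c) q (m + 2)
        - q * (a + b + 2 * ((m : ℂ) + 2) + q - 1) * conv (f a b c) q (m + 1)
        + q ^ 2 * conv (f a b c) q m := by
  set Fn := f a b c with hF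
  -- linearity decompositions
  have hL : ∀ n, conv (fun k => ((k : ℂ) + 1) * (c + k) * Fn (k + 1)) q n =
      c * conv (D Fn) q n + conv (fun k => (k : ℂ) * D Fn k) q n := by
    intro n
    unfold conv
    rw [Finset.mul_sum, ← Finset.sum_add_distrib]
    refine Finset.sum_congr rfl fun k _ => ?_
    unfold D; push_cast; ring
  have hR : ∀ n, conv (fun k => (a + k) * (b + k) * Fn k) q n =
      a * b * conv Fn q n + (a + b) * conv (fun k => (k : ℂ) * Fn k) q n +
        conv (fun k => (k : ℂ) * ((k : ℂ) * Fn k)) q n := by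
    intro n
    unfold conv
    rw [Finset.mul_sum, Finset.mul_sum, ← Finset.sum_add_distrib, ← Finset.sum_add_distrib]
    refine Finset.sum_congr rfl fun k _ => ?_
    ring
  have h6 : ∀ n, conv (fun k => ((k : ℂ) + 1) * (c + k) * Fn (k + 1)) q n =
      conv (fun k => (a + k) * (b + k) * Fn k) q n := by
    intro n
    unfold conv
    refine Finset.sum_congr rfl fun k _ => ?_
    have := f_rec a b c hc k
    simp only [hF] at this ⊢
    rw [this]
  have hDkF : ∀ n, conv (D (fun k => (k : ℂ) * Fn k)) q n =
      conv (D Fn) q n + conv (fun k => (k : ℂ) * D Fn k) q n := by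
    intro n
    unfold conv
    rw [← Finset.sum_add_distrib]
    refine Finset.sum_congr rfl fun k _ => ?_
    unfold D; push_cast; ring
  -- the six equations
  have E1 := h6 (m + 2)
  rw [hL, hR] at E1
  rw [shift (D Fn) q (m + 1), shift Fn q (m + 1)] at E1
  have hkk : conv (fun k => (k : ℂ) * ((k : ℂ) * Fn k)) q (m + 2) =
      conv (D Fn) q (m + 1) + conv (D (D Fn)) q m := by
    rw [shift (fun k => (k : ℂ) * Fn k) q (m + 1), hDkF (m + 1), shift (D Fn) q m]
  rw [hkk] at E1
  have E2 := genstar (D Fn) q (m + 1)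
  have E3 := genstar (D Fn) q m
  have E4 := genstar Fn q (m + 2)
  have E5 := genstar Fn q (m + 1)
  have E6 := genstar Fn q m
  push_cast at E1 E2 E3 E4 E5 E6 ⊢
  linear_combination E1 + E2 - E3 + (c + (m : ℂ) + 2) * E4 -
    (a + b + (m : ℂ) + 2 + q) * E5 + q * E6

end S12

namespace S12

lemma f0 (a b c : ℂ) : f a b c 0 = 1 := by simp [f]

lemma f1 (a b c : ℂ) : f a b c 1 = a * b / c := by
  simp [f, ascPochhammer_one, Nat.factorial]

lemma f2 (a b c : ℂ) : f a b c 2 = a * (a + 1) * (b * (b + 1)) / (c * (c + 1) * 2) := by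
  have h2 : (2 : ℕ) = 1 + 1 := rfl
  simp only [f, h2, ascPochhammer_succ_eval, ascPochhammer_one, eval_X, Nat.factorial]
  push_cast
  ring

lemma g0 (q : ℂ) : g q 0 = 1 := by simp [g]

lemma g1 (q : ℂ) : g q 1 = q := by simp [g, Nat.factorial]

lemma g2 (q : ℂ) : g q 2 = q ^ 2 / 2 := by
  simp [g, Nat.factorial]

lemma w0val (a b c q : ℂ) : conv (f a b c) q 0 = 1 := by
  simp [conv, f0, g0]

lemma w1val (a b c q : ℂ) : conv (f a b c) q 1 = a * b / c + q := by
  simp only [conv, Finset.sum_range_succ, Finset.sum_range_zero]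
  norm_num [f0, f1, g0, g1]
  ring

lemma w2val (a b c q : ℂ) (hc : ∀ n : ℕ, -c ≠ (n : ℂ)) :
    conv (f a b c) q 2 =
      a * (1 + a) * b * (1 + b) / (2 * c * (1 + c)) + a * b * q / c + q ^ 2 / 2 := by
  have hc0 : c ≠ 0 := fun h => hc 0 (by simp [h])
  have hc1 : c + 1 ≠ 0 := by
    intro h
    exact hc 1 (by push_cast; linear_combination -h)
  simp only [conv, Finset.sum_range_succ, Finset.sum_range_zero]
  norm_num [f0, f1, f2, g0, g1, g2]
  ring

lemma uniq (a b c q : ℂ) (hc : ∀ n : ℕ, -c ≠ (n : ℂ)) (x : ℕ → ℂ)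
    (h0 : x 0 = 1) (h1 : x 1 = a * b / c + q)
    (h2 : x 2 = a * (1 + a) * b * (1 + b) / (2 * c * (1 + c)) + a * b * q / c + q ^ 2 / 2)
    (hrec : ∀ n : ℕ, 2 ≤ n →
      x (n + 1) = ((a + (n : ℂ)) * (b + (n : ℂ)) + q * (c + 2 * (n : ℂ))) /
          (((n : ℂ) + 1) * (c + (n : ℂ))) * x n
        - q * (a + b + 2 * (n : ℂ) + q - 1) / (((n : ℂ) + 1) * (c + (n : ℂ))) * x (n - 1)
        + q ^ 2 / (((n : ℂ) + 1) * (c + (n : ℂ))) * x (n - 2)) :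
    ∀ n, x n = conv (f a b c) q n := by
  intro n
  induction n using Nat.strong_induction_on with
  | _ n ih =>
    match n with
    | 0 => rw [h0, w0val]
    | 1 => rw [h1, w1val]
    | 2 => rw [h2, w2val a b c q hc]
    | (m + 3) =>
      have hr := hrec (m + 2) (by omega)
      have e1 : m + 2 + 1 = m + 3 := rfl
      have e2 : m + 2 - 1 = m + 1 := rfl
      have e3 : m + 2 - 2 = m := rfl
      rw [e1, e2, e3] at hr
      rw [hr, ih (m + 2) (by omega), ih (m + 1) (by omega), ih m (by omega)]
      have hK : (((m : ℂ) + 2) + 1) * (c + ((m : ℂ) + 2)) ≠ 0 := by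
        apply mul_ne_zero
        · intro h
          have : ((m : ℂ) + 3) = 0 := by linear_combination h
          have h3 : (((m + 3 : ℕ) : ℂ)) = 0 := by push_cast; linear_combination this
          exact Nat.cast_ne_zero.2 (by omega) h3
        · have := cadd_ne c hc (m + 2)
          push_cast at this
          exact this
      have hw := wrec a b c q hc m
      push_cast
      rw [div_mul_eq_mul_div, div_mul_eq_mul_div, div_mul_eq_mul_div, div_sub_div_same,
        ← add_div, div_eq_iff hK]
      linear_combination -hw

end S12

namespace S12

lemma tendsto_inv_add (x : ℂ) : Filter.Tendsto (fun k : ℕ => (x + k)⁻¹) Filter.atTop (nhds 0) := by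
  have hco : Filter.Tendsto (fun k : ℕ => x + (k : ℂ)) Filter.atTop (Bornology.cobounded ℂ) := by
    rw [← tendsto_norm_atTop_iff_cobounded]
    apply Filter.tendsto_atTop_mono (f := fun k : ℕ => (k : ℝ) - ‖x‖)
    · intro k
      have h1 : ‖(k : ℂ)‖ ≤ ‖x + k‖ + ‖x‖ := by
        calc ‖(k : ℂ)‖ = ‖(x + k) + (-x)‖ := by ring_nf
          _ ≤ ‖x + (k : ℂ)‖ + ‖(-x : ℂ)‖ := norm_add_le _ _
          _ = ‖x + (k : ℂ)‖ + ‖x‖ := by rw [norm_neg]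
      have h2 : ‖(k : ℂ)‖ = (k : ℝ) := by
        simp
      linarith
    · exact Filter.tendsto_atTop_add_const_right _ _ tendsto_natCast_atTop_atTop
  exact Filter.tendsto_inv₀_cobounded.comp hco

lemma tendsto_rho (a b c : ℂ) (hc : ∀ n : ℕ, -c ≠ (n : ℂ)) :
    Filter.Tendsto (fun k : ℕ => (a + k) * (b + k) / (((k : ℂ) + 1) * (c + k)))
      Filter.atTop (nhds 1) := by
  have h1 : Filter.Tendsto (fun k : ℕ => (1 + (a - 1) * ((1 : ℂ) + k)⁻¹) *
      (1 + (b - c) * (c + k)⁻¹)) Filter.atTop (nhds ((1 + (a - 1) * 0) * (1 + (b - c) * 0))) := by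
    exact ((tendsto_const_nhds.add (tendsto_const_nhds.mul (tendsto_inv_add 1))).mul
      (tendsto_const_nhds.add (tendsto_const_nhds.mul (tendsto_inv_add c))))
  have h2 : ((1 : ℂ) + (a - 1) * 0) * (1 + (b - c) * 0) = 1 := by ring
  rw [h2] at h1
  apply h1.congr
  intro k
  have hk1 : ((1 : ℂ) + k) ≠ 0 := by
    have : ((k : ℂ) + 1) ≠ 0 := Nat.cast_add_one_ne_zero k
    intro h; exact this (by linear_combination h)
  have hk2 : (c + (k : ℂ)) ≠ 0 := cadd_ne c hc k
  have e1 : 1 + (a - 1) * ((1 : ℂ) + k)⁻¹ = (a + k) / ((k : ℂ) + 1) := by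
    rw [eq_div_iff (Nat.cast_add_one_ne_zero k)]
    have h1 : ((1 : ℂ) + k) ≠ 0 := hk1
    field_simp
    ring
  have e2 : 1 + (b - c) * (c + (k : ℂ))⁻¹ = (b + k) / (c + (k : ℂ)) := by
    rw [eq_div_iff hk2]
    field_simp
    ring
  rw [e1, e2, div_mul_div_comm]

lemma summable_f_norm (a b c : ℂ) (hc : ∀ n : ℕ, -c ≠ (n : ℂ)) (z : ℂ) (hz : ‖z‖ < 1) :
    Summable (fun k => ‖f a b c k * z ^ k‖) := by
  set r : ℝ := (1 + ‖z‖) / 2 with hr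
  have hr1 : r < 1 := by rw [hr]; linarith
  have hzr : ‖z‖ < r := by rw [hr]; linarith
  apply summable_of_ratio_norm_eventually_le hr1
  have htend : Filter.Tendsto
      (fun k : ℕ => ‖(a + k) * (b + k) / (((k : ℂ) + 1) * (c + k))‖ * ‖z‖)
      Filter.atTop (nhds (‖(1 : ℂ)‖ * ‖z‖)) :=
    (tendsto_rho a b c hc).norm.mul_const _
  rw [norm_one, one_mul] at htend
  filter_upwards [htend.eventually_le_const hzr] with k hk
  have hK : (((k : ℂ) + 1) * (c + k)) ≠ 0 :=
    mul_ne_zero (Nat.cast_add_one_ne_zero k) (cadd_ne c hc k)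
  have hfk : f a b c (k + 1) = (a + k) * (b + k) / (((k : ℂ) + 1) * (c + k)) * f a b c k := by
    rw [div_mul_eq_mul_div, eq_div_iff hK]
    linear_combination f_rec a b c hc k
  have hsplit : f a b c (k + 1) * z ^ (k + 1) =
      ((a + k) * (b + k) / (((k : ℂ) + 1) * (c + k)) * z) * (f a b c k * z ^ k) := by
    rw [hfk, pow_succ]; ring
  rw [norm_norm, norm_norm, hsplit, norm_mul, norm_mul]
  calc ‖(a + k) * (b + k) / (((k : ℂ) + 1) * (c + k))‖ * ‖z‖ * ‖f a b c k * z ^ k‖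
      ≤ r * ‖f a b c k * z ^ k‖ := by
        exact mul_le_mul_of_nonneg_right hk (norm_nonneg _)

lemma summable_g_norm (q z : ℂ) : Summable (fun m => ‖g q m * z ^ m‖) := by
  have : (fun m => ‖g q m * z ^ m‖) = fun m => ‖q * z‖ ^ m / (Nat.factorial m : ℝ) := by
    funext m
    rw [g, div_mul_eq_mul_div, norm_div, ← mul_pow, norm_pow]
    congr 1
    simp
  rw [this]
  exact Real.summable_pow_div_factorial _

end S12

namespace S12

lemma F_eq (a b c z : ℂ) : F a b c z = ∑' k : ℕ, f a b c k * z ^ k := rfl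

lemma exp_eq (q z : ℂ) : Complex.exp (q * z) = ∑' m : ℕ, g q m * z ^ m := by
  rw [Complex.exp_eq_exp_ℂ, NormedSpace.exp_eq_tsum_div]
  show ∑' n : ℕ, (q * z) ^ n / (Nat.factorial n : ℂ) = _
  refine tsum_congr fun m => ?_
  rw [g, mul_pow, div_mul_eq_mul_div]

lemma conv_term (a b c q z : ℂ) (n : ℕ) :
    ∑ k ∈ Finset.range (n + 1), (f a b c k * z ^ k) * (g q (n - k) * z ^ (n - k)) =
      conv (f a b c) q n * z ^ n := by
  rw [conv, Finset.sum_mul]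
  refine Finset.sum_congr rfl fun k hk => ?_
  rw [Finset.mem_range] at hk
  have : z ^ k * z ^ (n - k) = z ^ n := by
    rw [← pow_add]
    congr 1
    omega
  calc f a b c k * z ^ k * (g q (n - k) * z ^ (n - k))
      = f a b c k * g q (n - k) * (z ^ k * z ^ (n - k)) := by ring
    _ = f a b c k * g q (n - k) * z ^ n := by rw [this]

lemma cauchy (a b c q z : ℂ) (hc : ∀ n : ℕ, -c ≠ (n : ℂ)) (hz : ‖z‖ < 1) :
    F a b c z * Complex.exp (q * z) = ∑' n : ℕ, conv (f a b c) q n * z ^ n := by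
  rw [F_eq, exp_eq,
    tsum_mul_tsum_eq_tsum_sum_range_of_summable_norm (summable_f_norm a b c hc z hz)
      (summable_g_norm q z)]
  exact tsum_congr (conv_term a b c q z)

lemma cauchy_summable (a b c q z : ℂ) (hc : ∀ n : ℕ, -c ≠ (n : ℂ)) (hz : ‖z‖ < 1) :
    Summable (fun n => conv (f a b c) q n * z ^ n) := by
  have := (summable_norm_sum_mul_range_of_summable_norm
    (summable_f_norm a b c hc z hz) (summable_g_norm q z)).of_norm
  exact this.congr (conv_term a b c q z)

end S12

open S12 in
theorem stmt12 (a b c p : ℂ) (hc : ∀ n : ℕ, -c ≠ (n : ℂ))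
    (u v : ℕ → ℂ)
    (hu0 : u 0 = 1) (hu1 : u 1 = a * b / c + p)
    (hu2 : u 2 = a * (1 + a) * b * (1 + b) / (2 * c * (1 + c)) + a * b * p / c + p ^ 2 / 2)
    (hv0 : v 0 = 1) (hv1 : v 1 = a * b / c - p)
    (hv2 : v 2 = a * (1 + a) * b * (1 + b) / (2 * c * (1 + c)) - a * b * p / c + p ^ 2 / 2)
    (hrecu : ∀ n : ℕ, 2 ≤ n →
      u (n + 1) = ((a + (n : ℂ)) * (b + (n : ℂ)) + p * (c + 2 * (n : ℂ))) /
          (((n : ℂ) + 1) * (c + (n : ℂ))) * u n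
        - p * (a + b + 2 * (n : ℂ) + p - 1) / (((n : ℂ) + 1) * (c + (n : ℂ))) * u (n - 1)
        + p ^ 2 / (((n : ℂ) + 1) * (c + (n : ℂ))) * u (n - 2))
    (hrecv : ∀ n : ℕ, 2 ≤ n →
      v (n + 1) = ((a + (n : ℂ)) * (b + (n : ℂ)) - p * (c + 2 * (n : ℂ))) /
          (((n : ℂ) + 1) * (c + (n : ℂ))) * v n
        + p * (a + b + 2 * (n : ℂ) - p - 1) / (((n : ℂ) + 1) * (c + (n : ℂ))) * v (n - 1)
        + p ^ 2 / (((n : ℂ) + 1) * (c + (n : ℂ))) * v (n - 2)) :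
    ∀ z : ℂ, ‖z‖ < 1 → Complex.cosh (p * z) * F a b c z = ∑' n : ℕ, (u n + v n) / 2 * z ^ n := by
  intro z hz
  have hu : ∀ n, u n = conv (f a b c) p n :=
    uniq a b c p hc u hu0 hu1 hu2 hrecu
  have hv : ∀ n, v n = conv (f a b c) (-p) n := by
    refine uniq a b c (-p) hc v hv0 (by rw [hv1]; ring) (by rw [hv2]; ring) ?_
    intro n hn
    rw [hrecv n hn]
    ring
  have hsu : Summable (fun n => conv (f a b c) p n * z ^ n) :=
    cauchy_summable a b c p z hc hz
  have hsv : Summable (fun n => conv (f a b c) (-p) n * z ^ n) :=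
    cauchy_summable a b c (-p) z hc hz
  have hcosh : Complex.cosh (p * z) = (Complex.exp (p * z) + Complex.exp ((-p) * z)) / 2 := by
    rw [Complex.cosh]
    congr 2
    ring
  rw [hcosh]
  have key : (Complex.exp (p * z) + Complex.exp ((-p) * z)) / 2 * F a b c z =
      ((∑' n : ℕ, conv (f a b c) p n * z ^ n) +
        (∑' n : ℕ, conv (f a b c) (-p) n * z ^ n)) / 2 := by
    rw [← cauchy a b c p z hc hz, ← cauchy a b c (-p) z hc hz]
    ring
  rw [key]
  rw [← Summable.tsum_add hsu hsv]
  rw [← tsum_div_const]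
  refine tsum_congr fun n => ?_
  rw [hu n, hv n]
  ring
end
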